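/- arXiv:1108.6319 — 9 statements merged into one kernel-verified Lean document; each statement's English description precedes it below -/
import Mathlib

section
/- The figures F = {(a, a) : a ∈ ℝ} and G = {(a, a) : a ∈ [0,1] ∪ [2,3]} are equivalent under figure involvement. -/
/-- Figure involvement: `F ≤ G` if there exist sets `A, B ⊆ ℝ` and strictly
increasing injections `φx : A → ℝ`, `φy : B → ℝ` with `F ⊆ A × B` whose induced
map sends `F` into `G`. -/
def Involves (F G : Set (ℝ × ℝ)) : Prop :=
  ∃ (A B : Set ℝ) (φx φy : ℝ → ℝ),
    StrictMonoOn φx A ∧ StrictMonoOn φy B ∧ F ⊆ A ×ˢ B ∧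
    ∀ p ∈ F, (φx p.1, φy p.2) ∈ G

/-- Figure equivalence: mutual involvement. -/
def FigEquiv (F G : Set (ℝ × ℝ)) : Prop := Involves F G ∧ Involves G F

/-- The diagonal line is figure-equivalent to the diagonal over `[0,1] ∪ [2,3]`. -/
theorem diagonal_equiv_brokenDiagonal :
    FigEquiv {p : ℝ × ℝ | p.2 = p.1}
      {p : ℝ × ℝ | p.1 ∈ Set.Icc (0:ℝ) 1 ∪ Set.Icc (2:ℝ) 3 ∧ p.2 = p.1} := by
  have hπ : (0:ℝ) < Real.pi := Real.pi_pos
  set φ : ℝ → ℝ := fun x => (Real.arctan x + Real.pi / 2) / Real.pi with hφ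
  have hmono : StrictMono φ := by
    intro a b hab
    have h := Real.arctan_strictMono hab
    exact div_lt_div_of_pos_right (by linarith) hπ
  have hmem : ∀ x : ℝ, φ x ∈ Set.Icc (0:ℝ) 1 := by
    intro x
    have h1 := Real.neg_pi_div_two_lt_arctan x
    have h2 := Real.arctan_lt_pi_div_two x
    constructor
    · apply div_nonneg _ hπ.le; linarith
    · rw [hφ]; dsimp; rw [div_le_one hπ]; linarith
  constructor
  · refine ⟨Set.univ, Set.univ, φ, φ, (hmono.strictMonoOn _), (hmono.strictMonoOn _), ?_, ?_⟩
    · intro p _; simp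
    · intro p hp
      simp only [Set.mem_setOf_eq] at hp ⊢
      exact ⟨Or.inl (hmem p.1), by rw [hp]⟩
  · refine ⟨Set.univ, Set.univ, id, id, (strictMono_id.strictMonoOn _), (strictMono_id.strictMonoOn _), ?_, ?_⟩
    · intro p _; simp
    · intro p hp
      exact hp.2
end

section
/- The unit diamond {(a,b) : |a| + |b| = 1} is equivalent, under figure involvement, to the unit circle {(a,b) : a² + b² = 1}. -/
open Real Set

lemma sinHalfPi_strictMonoOn : StrictMonoOn (fun x : ℝ => Real.sin (π / 2 * x)) (Icc (-1) 1) := by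
  intro x hx y hy hxy
  have hπ : (0:ℝ) < π / 2 := by positivity
  apply Real.strictMonoOn_sin
  · constructor
    · nlinarith [hx.1]
    · nlinarith [hx.2]
  · constructor
    · nlinarith [hy.1]
    · nlinarith [hy.2]
  · nlinarith

lemma sin_sq_diamond {a b : ℝ} (h : |a| + |b| = 1) :
    Real.sin (π / 2 * a) ^ 2 + Real.sin (π / 2 * b) ^ 2 = 1 := by
  have h1 : Real.sin (π / 2 * a) ^ 2 = Real.sin (π / 2 * |a|) ^ 2 := by
    rcases abs_cases a with ⟨h', _⟩ | ⟨h', _⟩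
    · rw [h']
    · rw [h', mul_neg, Real.sin_neg]; ring
  have h2 : Real.sin (π / 2 * b) ^ 2 = Real.sin (π / 2 * |b|) ^ 2 := by
    rcases abs_cases b with ⟨h', _⟩ | ⟨h', _⟩
    · rw [h']
    · rw [h', mul_neg, Real.sin_neg]; ring
  have hb : |b| = 1 - |a| := by linarith
  rw [h1, h2, hb]
  have : π / 2 * (1 - |a|) = π / 2 - π / 2 * |a| := by ring
  rw [this, Real.sin_pi_div_two_sub]
  exact Real.sin_sq_add_cos_sq _

lemma arcsin_scaled_strictMonoOn : StrictMonoOn (fun x : ℝ => 2 / π * Real.arcsin x) (Icc (-1) 1) := by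
  intro x hx y hy hxy
  have hπ : (0:ℝ) < 2 / π := by positivity
  exact mul_lt_mul_of_pos_left (Real.strictMonoOn_arcsin hx hy hxy) hπ

lemma abs_arcsin (x : ℝ) : |Real.arcsin x| = Real.arcsin |x| := by
  rcases abs_cases x with ⟨h', hx⟩ | ⟨h', hx⟩
  · rw [h', abs_of_nonneg (Real.arcsin_nonneg.2 hx)]
  · have : Real.arcsin x ≤ 0 := by
      rw [show x = -(-x) by ring, Real.arcsin_neg]
      simpa using Real.arcsin_nonneg.2 (by linarith : (0:ℝ) ≤ -x)
    rw [h', abs_of_nonpos this, ← Real.arcsin_neg]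

lemma arcsin_circle {a b : ℝ} (h : a ^ 2 + b ^ 2 = 1) :
    |2 / π * Real.arcsin a| + |2 / π * Real.arcsin b| = 1 := by
  have hπ : (0:ℝ) < π := Real.pi_pos
  have key : Real.arcsin |a| + Real.arcsin |b| = π / 2 := by
    have hb : Real.arcsin |b| = Real.arccos |a| := by
      have h1 : Real.sin (Real.arcsin |b|) = |b| :=
        Real.sin_arcsin (by linarith [abs_nonneg b] : (-1:ℝ) ≤ |b|) (by nlinarith [abs_nonneg b, sq_abs b])
      have h2 : Real.sin (Real.arccos |a|) = |b| := by
        rw [Real.sin_arccos]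
        rw [show (1:ℝ) - |a| ^ 2 = b ^ 2 by rw [sq_abs]; linarith]
        rw [show b ^ 2 = |b| ^ 2 by rw [sq_abs]]
        exact Real.sqrt_sq (abs_nonneg b)
      apply Real.injOn_sin
      · exact ⟨Real.neg_pi_div_two_le_arcsin _, Real.arcsin_le_pi_div_two _⟩
      · constructor
        · linarith [Real.arccos_nonneg |a|]
        · exact Real.arccos_le_pi_div_two.2 (abs_nonneg a)
      · rw [h1, h2]
    rw [hb, Real.arccos_eq_pi_div_two_sub_arcsin]; ring
  rw [abs_mul, abs_mul, abs_arcsin, abs_arcsin,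
    abs_of_nonneg (by positivity : (0:ℝ) ≤ 2 / π)]
  field_simp
  linarith

/-- The unit diamond is figure-equivalent to the unit circle. -/
theorem diamond_equiv_circle :
    FigEquiv {p : ℝ × ℝ | |p.1| + |p.2| = 1} {p : ℝ × ℝ | p.1 ^ 2 + p.2 ^ 2 = 1} := by
  constructor
  · refine ⟨Icc (-1) 1, Icc (-1) 1, fun x => Real.sin (π / 2 * x),
      fun x => Real.sin (π / 2 * x), sinHalfPi_strictMonoOn, sinHalfPi_strictMonoOn, ?_, ?_⟩
    · rintro ⟨a, b⟩ h
      simp only [Set.mem_setOf_eq] at h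
      have ha := abs_nonneg a; have hb := abs_nonneg b
      constructor <;> constructor <;>
        [skip; skip; skip; skip] <;>
        first
          | linarith [neg_abs_le a, le_abs_self a]
          | linarith [neg_abs_le b, le_abs_self b]
    · rintro ⟨a, b⟩ h
      exact sin_sq_diamond h
  · refine ⟨Icc (-1) 1, Icc (-1) 1, fun x => 2 / π * Real.arcsin x,
      fun x => 2 / π * Real.arcsin x, arcsin_scaled_strictMonoOn, arcsin_scaled_strictMonoOn,
      ?_, ?_⟩
    · rintro ⟨a, b⟩ h
      simp only [Set.mem_setOf_eq] at h
      have h1 : a ^ 2 ≤ 1 := by nlinarith [sq_nonneg b]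
      have h2 : b ^ 2 ≤ 1 := by nlinarith [sq_nonneg a]
      constructor <;> constructor <;> nlinarith
    · rintro ⟨a, b⟩ h
      exact arcsin_circle h
end

section
/- For any finite alphabet Σ, the set Σ* of finite words over Σ, ordered by the subword (subsequence) order, is partially well ordered (Higman's Theorem for finite alphabets). -/
lemma sublistForall₂_eq_iff {σ : Type*} {l₁ l₂ : List σ} :
    List.SublistForall₂ (· = ·) l₁ l₂ ↔ l₁.Sublist l₂ := by
  rw [List.sublistForall₂_iff]
  constructor
  · rintro ⟨l, hl, hsub⟩
    rw [List.forall₂_eq_eq_eq] at hl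
    rwa [hl]
  · exact fun h => ⟨l₁, by rw [List.forall₂_eq_eq_eq], h⟩

/-- Higman's Theorem for finite alphabets: the set of words over a finite
alphabet, under the subword (subsequence) order, is partially well ordered:
it has no infinite strictly descending chain and no infinite antichain. -/
theorem higman_finite_alphabet (σ : Type*) [Fintype σ] :
    (¬∃ g : ℕ → List σ, ∀ n, List.Sublist (g (n + 1)) (g n) ∧ g (n + 1) ≠ g n) ∧
      ¬∃ A : Set (List σ), A.Infinite ∧
        IsAntichain (fun v w : List σ => List.Sublist v w) A := by
  have hpwo : Set.PartiallyWellOrderedOn {l : List σ | ∀ x, x ∈ l → x ∈ (Set.univ : Set σ)}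
      (List.SublistForall₂ (· = ·)) :=
    Set.PartiallyWellOrderedOn.partiallyWellOrderedOn_sublistForall₂ (· = ·)
      (Set.finite_univ.partiallyWellOrderedOn)
  constructor
  · rintro ⟨g, hg⟩
    have hlen : ∀ n, (g (n + 1)).length < (g n).length := fun n =>
      Nat.lt_of_le_of_ne ((hg n).1.length_le)
        (fun e => (hg n).2 ((hg n).1.eq_of_length e))
    have key : ∀ n, (g n).length + n ≤ (g 0).length := by
      intro n
      induction n with
      | zero => simp
      | succ k ih => have := hlen k; omega
    have := key ((g 0).length + 1)
    omega
  · rintro ⟨A, hA, hanti⟩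
    let f := hA.natEmbedding
    obtain ⟨m, n, hmn, h⟩ := hpwo.exists_lt (f := fun n => (f n : List σ)) (fun n x _ => trivial)
    rw [sublistForall₂_eq_iff] at h
    exact hanti (f m).2 (f n).2
      (fun e => hmn.ne (f.injective (Subtype.ext e))) h
end

section
/- Every nonempty subword-closed language over a finite alphabet Σ can be expressed as a finite union of languages of the form Σ₁* {ε, a₂} Σ₃* {ε, a₄} ⋯ Σ_{2q}* {ε, a_{2q}} Σ_{2q+1}*, where q ≥ 0, a₂, …, a_{2q} ∈ Σ, and Σ₁, …, Σ_{2q+1} ⊆ Σ. -/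
/-- Concatenation of languages. -/
def conc {σ : Type*} (K L : Set (List σ)) : Set (List σ) :=
  {w | ∃ u ∈ K, ∃ v ∈ L, w = u ++ v}

/-- `Γ*`: all words using only letters from `Γ`. -/
def lettersIn {σ : Type*} (Γ : Set σ) : Set (List σ) :=
  {w | ∀ a ∈ w, a ∈ Γ}

/-- `{ε, a}`: the empty word and the single-letter word `a`. -/
def optLetter {σ : Type*} (a : σ) : Set (List σ) :=
  {[], [a]}

/-- The language `Σ₁* {ε,a₂} Σ₃* {ε,a₄} ⋯ Σ_{2q}* {ε,a_{2q}} Σ_{2q+1}*`,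
presented by the list of pairs `(Σ_{2i-1}, a_{2i})` and the final set `Σ_{2q+1}`. -/
def altLang {σ : Type*} : List (Set σ × σ) → Set σ → Set (List σ)
  | [], Γ => lettersIn Γ
  | (Δ, a) :: rest, Γ => conc (lettersIn Δ) (conc (optLetter a) (altLang rest Γ))

namespace SWC

variable {σ : Type*}

/-- Atoms: star blocks `A*` and mandatory single letters. -/
inductive Atom (σ : Type*) where
  | star : Set σ → Atom σ
  | lit : σ → Atom σ

/-- Products of atoms. -/
def prodL : List (Atom σ) → Set (List σ)
  | [] => {[]}
  | .star A :: t => conc (lettersIn A) (prodL t)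
  | .lit a :: t => conc {[a]} (prodL t)

/-- Finite unions of products. -/
def unionL (D : List (List (Atom σ))) : Set (List σ) := ⋃ p ∈ D, prodL p

@[simp] theorem prodL_nil : prodL ([] : List (Atom σ)) = {[]} := rfl
theorem prodL_star (A : Set σ) (t : List (Atom σ)) :
    prodL (.star A :: t) = conc (lettersIn A) (prodL t) := rfl
theorem prodL_lit (a : σ) (t : List (Atom σ)) :
    prodL (.lit a :: t) = conc {[a]} (prodL t) := rfl

theorem mem_conc_lit {a : σ} {X : Set (List σ)} {w : List σ} :
    w ∈ conc {[a]} X ↔ ∃ v ∈ X, w = a :: v := by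
  constructor
  · rintro ⟨u, hu, v, hv, rfl⟩
    rw [Set.mem_singleton_iff] at hu; subst hu
    exact ⟨v, hv, rfl⟩
  · rintro ⟨v, hv, rfl⟩
    exact ⟨[a], rfl, v, hv, rfl⟩

theorem conc_nil_left (X : Set (List σ)) : conc {[]} X = X := by
  ext w; constructor
  · rintro ⟨u, hu, v, hv, rfl⟩
    rw [Set.mem_singleton_iff] at hu; subst hu; simpa using hv
  · intro h; exact ⟨[], rfl, w, h, rfl⟩

theorem conc_nil_right (X : Set (List σ)) : conc X {[]} = X := by
  ext w; constructor
  · rintro ⟨u, hu, v, hv, rfl⟩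
    rw [Set.mem_singleton_iff] at hv; subst hv; simpa using hu
  · intro h; exact ⟨w, h, [], rfl, by simp⟩

theorem conc_union (K X Y : Set (List σ)) : conc K (X ∪ Y) = conc K X ∪ conc K Y := by
  ext w; constructor
  · rintro ⟨u, hu, v, hv, rfl⟩
    cases hv with
    | inl h => exact Or.inl ⟨u, hu, v, h, rfl⟩
    | inr h => exact Or.inr ⟨u, hu, v, h, rfl⟩
  · rintro (⟨u, hu, v, hv, rfl⟩ | ⟨u, hu, v, hv, rfl⟩)
    · exact ⟨u, hu, v, Or.inl hv, rfl⟩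
    · exact ⟨u, hu, v, Or.inr hv, rfl⟩

theorem conc_empty (K : Set (List σ)) : conc K ∅ = ∅ := by
  ext w; constructor
  · rintro ⟨u, hu, v, hv, rfl⟩; exact hv.elim
  · intro h; exact h.elim

@[simp] theorem unionL_nil : unionL ([] : List (List (Atom σ))) = ∅ := by simp [unionL]
@[simp] theorem unionL_cons (p : List (Atom σ)) (D : List (List (Atom σ))) :
    unionL (p :: D) = prodL p ∪ unionL D := by
  ext w; simp [unionL, List.mem_cons, or_and_right, exists_or]

theorem unionL_append (D₁ D₂ : List (List (Atom σ))) :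
    unionL (D₁ ++ D₂) = unionL D₁ ∪ unionL D₂ := by
  induction D₁ with
  | nil => simp
  | cons p D ih => simp [ih, Set.union_assoc]

theorem conc_unionL (K : Set (List σ)) (f : List (Atom σ) → List (Atom σ))
    (hf : ∀ p, conc K (prodL p) = prodL (f p)) (D : List (List (Atom σ))) :
    conc K (unionL D) = unionL (D.map f) := by
  induction D with
  | nil => simp [conc_empty]
  | cons p D ih => simp only [unionL_cons, conc_union, hf, ih, List.map_cons]

theorem nil_mem_lettersIn (A : Set σ) : [] ∈ lettersIn A := by
  intro a ha; simp at ha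

theorem append_mem_lettersIn {A : Set σ} {u v : List σ}
    (hu : u ∈ lettersIn A) (hv : v ∈ lettersIn A) : u ++ v ∈ lettersIn A := by
  intro a ha
  rcases List.mem_append.1 ha with h | h
  · exact hu a h
  · exact hv a h

theorem lettersIn_append_left {A : Set σ} {u v : List σ}
    (h : u ++ v ∈ lettersIn A) : u ∈ lettersIn A :=
  fun a ha => h a (List.mem_append.2 (Or.inl ha))

theorem lettersIn_append_right {A : Set σ} {u v : List σ}
    (h : u ++ v ∈ lettersIn A) : v ∈ lettersIn A :=
  fun a ha => h a (List.mem_append.2 (Or.inr ha))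

theorem lettersIn_empty : lettersIn (∅ : Set σ) = {[]} := by
  ext w; constructor
  · intro h
    cases w with
    | nil => rfl
    | cons a w => exact absurd (h a List.mem_cons_self) (Set.notMem_empty a)
  · intro h
    rw [Set.mem_singleton_iff] at h; subst h
    exact nil_mem_lettersIn _

/-! ### Intersections of products -/

theorem nil_inter (q : List (Atom σ)) : ∃ D, prodL [] ∩ prodL q = unionL D := by
  classical
  by_cases h : ([] : List σ) ∈ prodL q
  · refine ⟨[[]], ?_⟩
    have h2 : unionL [([] : List (Atom σ))] = {[]} := by simp
    rw [h2, prodL_nil]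
    exact Set.inter_eq_left.mpr (Set.singleton_subset_iff.mpr h)
  · refine ⟨[], ?_⟩
    rw [unionL_nil, prodL_nil]
    ext w; simp only [Set.mem_inter_iff, Set.mem_empty_iff_false, iff_false]
    rintro ⟨h1, h2⟩
    rw [Set.mem_singleton_iff] at h1; subst h1
    exact h h2

theorem litlit (a b : σ) (t s : List (Atom σ))
    (h1 : ∃ D, prodL t ∩ prodL s = unionL D) :
    ∃ D, prodL (.lit a :: t) ∩ prodL (.lit b :: s) = unionL D := by
  classical
  obtain ⟨D1, hD1⟩ := h1
  by_cases hab : a = b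
  · subst hab
    refine ⟨D1.map (.lit a :: ·), ?_⟩
    rw [← conc_unionL {[a]} (.lit a :: ·) (fun p => rfl) D1, ← hD1]
    ext w
    rw [prodL_lit, prodL_lit]
    constructor
    · rintro ⟨hw1, hw2⟩
      obtain ⟨v, hv, rfl⟩ := mem_conc_lit.1 hw1
      obtain ⟨v', hv', he⟩ := mem_conc_lit.1 hw2
      have : v = v' := by injection he
      subst this
      exact mem_conc_lit.2 ⟨v, ⟨hv, hv'⟩, rfl⟩
    · intro hw
      obtain ⟨v, ⟨hv1, hv2⟩, rfl⟩ := mem_conc_lit.1 hw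
      exact ⟨mem_conc_lit.2 ⟨v, hv1, rfl⟩, mem_conc_lit.2 ⟨v, hv2, rfl⟩⟩
  · refine ⟨[], ?_⟩
    rw [unionL_nil]
    ext w; simp only [Set.mem_inter_iff, Set.mem_empty_iff_false, iff_false]
    rintro ⟨hw1, hw2⟩
    rw [prodL_lit] at hw1 hw2
    obtain ⟨v, _, rfl⟩ := mem_conc_lit.1 hw1
    obtain ⟨v', _, he⟩ := mem_conc_lit.1 hw2
    exact hab (by injection he)

theorem litstar (a : σ) (B : Set σ) (t s : List (Atom σ))
    (h1 : ∃ D, prodL t ∩ prodL (.star B :: s) = unionL D)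
    (h2 : ∃ D, prodL (.lit a :: t) ∩ prodL s = unionL D) :
    ∃ D, prodL (.lit a :: t) ∩ prodL (.star B :: s) = unionL D := by
  classical
  obtain ⟨D1, hD1⟩ := h1
  obtain ⟨D2, hD2⟩ := h2
  by_cases hab : a ∈ B
  · refine ⟨D1.map (.lit a :: ·) ++ D2, ?_⟩
    rw [unionL_append, ← conc_unionL {[a]} (.lit a :: ·) (fun p => rfl) D1, ← hD1, ← hD2]
    ext w
    constructor
    · rintro ⟨hw1, hw2⟩
      obtain ⟨v, hv, rfl⟩ := mem_conc_lit.1 hw1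
      rw [prodL_star] at hw2
      obtain ⟨u, hu, v', hv', he⟩ := hw2
      cases u with
      | nil =>
        right
        refine ⟨hw1, ?_⟩
        simp only [List.nil_append] at he
        rw [he]; exact hv'
      | cons c u' =>
        left
        rw [List.cons_append] at he
        have hc : c = a := by injection he with h _; exact h.symm
        have hvv : v = u' ++ v' := by injection he
        refine mem_conc_lit.2 ⟨v, ⟨hv, ?_⟩, rfl⟩
        rw [prodL_star]
        exact ⟨u', fun x hx => hu x (List.mem_cons_of_mem c hx), v', hv', hvv⟩
    · rintro (h | h)
      · obtain ⟨v, ⟨hvt, hvB⟩, rfl⟩ := mem_conc_lit.1 h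
        refine ⟨mem_conc_lit.2 ⟨v, hvt, rfl⟩, ?_⟩
        rw [prodL_star] at hvB ⊢
        obtain ⟨u, hu, v', hv', rfl⟩ := hvB
        refine ⟨a :: u, ?_, v', hv', rfl⟩
        intro x hx
        rcases List.mem_cons.1 hx with rfl | hx
        · exact hab
        · exact hu x hx
      · refine ⟨h.1, ?_⟩
        rw [prodL_star]
        exact ⟨[], nil_mem_lettersIn B, w, h.2, rfl⟩
  · refine ⟨D2, ?_⟩
    rw [← hD2]
    ext w
    constructor
    · rintro ⟨hw1, hw2⟩
      refine ⟨hw1, ?_⟩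
      obtain ⟨v, hv, rfl⟩ := mem_conc_lit.1 hw1
      rw [prodL_star] at hw2
      obtain ⟨u, hu, v', hv', he⟩ := hw2
      cases u with
      | nil =>
        simp only [List.nil_append] at he
        rw [he]; exact hv'
      | cons c u' =>
        rw [List.cons_append] at he
        have hc : a = c := by injection he
        exact absurd (hu c List.mem_cons_self) (hc ▸ hab)
    · rintro ⟨hw1, hw2⟩
      refine ⟨hw1, ?_⟩
      rw [prodL_star]
      exact ⟨[], nil_mem_lettersIn B, w, hw2, rfl⟩

theorem starstar (A B : Set σ) (t s : List (Atom σ))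
    (h1 : ∃ D, prodL t ∩ prodL (.star B :: s) = unionL D)
    (h2 : ∃ D, prodL (.star A :: t) ∩ prodL s = unionL D) :
    ∃ D, prodL (.star A :: t) ∩ prodL (.star B :: s) = unionL D := by
  obtain ⟨D1, hD1⟩ := h1
  obtain ⟨D2, hD2⟩ := h2
  refine ⟨(D1 ++ D2).map (.star (A ∩ B) :: ·), ?_⟩
  rw [← conc_unionL (lettersIn (A ∩ B)) (.star (A ∩ B) :: ·) (fun p => rfl) (D1 ++ D2),
    unionL_append, ← hD1, ← hD2]
  ext w
  constructor
  · rintro ⟨hw1, hw2⟩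
    rw [prodL_star] at hw1 hw2
    obtain ⟨u₁, hu₁, v₁, hv₁, he₁⟩ := hw1
    obtain ⟨u₂, hu₂, v₂, hv₂, he₂⟩ := hw2
    rw [he₁] at he₂
    rcases List.append_eq_append_iff.1 he₂ with ⟨m, hm1, hm2⟩ | ⟨m, hm1, hm2⟩
    · subst hm1
      refine ⟨u₁, fun x hx => ⟨hu₁ x hx, lettersIn_append_left hu₂ x hx⟩,
        v₁, Or.inl ⟨hv₁, ?_⟩, he₁⟩
      rw [prodL_star]
      exact ⟨m, lettersIn_append_right hu₂, v₂, hv₂, hm2⟩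
    · subst hm1
      refine ⟨u₂, fun x hx => ⟨lettersIn_append_left hu₁ x hx, hu₂ x hx⟩,
        v₂, Or.inr ⟨?_, hv₂⟩, he₂.symm ▸ he₁ ▸ rfl⟩
      rw [prodL_star]
      exact ⟨m, lettersIn_append_right hu₁, v₁, hv₁, hm2⟩
  · rintro ⟨u, hu, v, hv, rfl⟩
    rcases hv with ⟨hvt, hvB⟩ | ⟨hvA, hvs⟩
    · constructor
      · rw [prodL_star]
        exact ⟨u, fun x hx => (hu x hx).1, v, hvt, rfl⟩
      · rw [prodL_star] at hvB ⊢
        obtain ⟨u', hu', v', hv', rfl⟩ := hvB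
        exact ⟨u ++ u', append_mem_lettersIn (fun x hx => (hu x hx).2) hu', v', hv',
          (List.append_assoc u u' v').symm⟩
    · constructor
      · rw [prodL_star] at hvA ⊢
        obtain ⟨u', hu', v', hv', rfl⟩ := hvA
        exact ⟨u ++ u', append_mem_lettersIn (fun x hx => (hu x hx).1) hu', v', hv',
          (List.append_assoc u u' v').symm⟩
      · rw [prodL_star]
        exact ⟨u, fun x hx => (hu x hx).2, v, hvs, rfl⟩

theorem inter_aux : ∀ (n : ℕ) (p q : List (Atom σ)), p.length + q.length ≤ n →
    ∃ D, prodL p ∩ prodL q = unionL D := by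
  intro n
  induction n with
  | zero =>
    intro p q h
    have hp : p = [] := List.eq_nil_of_length_eq_zero (by omega)
    subst hp
    exact nil_inter q
  | succ n ih =>
    intro p q hlen
    cases p with
    | nil => exact nil_inter q
    | cons x t =>
      cases q with
      | nil =>
        obtain ⟨D, hD⟩ := nil_inter (x :: t)
        exact ⟨D, by rw [Set.inter_comm]; exact hD⟩
      | cons y s =>
        simp only [List.length_cons] at hlen
        cases x with
        | lit a =>
          cases y with
          | lit b =>
            exact litlit a b t s (ih t s (by omega))
          | star B =>
            exact litstar a B t s
              (ih t (.star B :: s) (by simp only [List.length_cons]; omega))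
              (ih (.lit a :: t) s (by simp only [List.length_cons]; omega))
        | star A =>
          cases y with
          | lit b =>
            obtain ⟨D, hD⟩ := litstar b A s t
              (ih s (.star A :: t) (by simp only [List.length_cons]; omega))
              (ih (.lit b :: s) t (by simp only [List.length_cons]; omega))
            exact ⟨D, by rw [Set.inter_comm]; exact hD⟩
          | star B =>
            exact starstar A B t s
              (ih t (.star B :: s) (by simp only [List.length_cons]; omega))
              (ih (.star A :: t) s (by simp only [List.length_cons]; omega))

theorem prod_inter_prod (p q : List (Atom σ)) : ∃ D, prodL p ∩ prodL q = unionL D :=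
  inter_aux (p.length + q.length) p q le_rfl

theorem prod_inter_unionL (p : List (Atom σ)) :
    ∀ D2, ∃ D, prodL p ∩ unionL D2 = unionL D := by
  intro D2
  induction D2 with
  | nil => exact ⟨[], by simp⟩
  | cons q D2 ih =>
    obtain ⟨Da, ha⟩ := prod_inter_prod p q
    obtain ⟨Db, hb⟩ := ih
    exact ⟨Da ++ Db, by
      rw [unionL_cons, Set.inter_union_distrib_left, ha, hb, unionL_append]⟩

theorem unionL_inter_unionL (D1 D2 : List (List (Atom σ))) :
    ∃ D, unionL D1 ∩ unionL D2 = unionL D := by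
  induction D1 with
  | nil => exact ⟨[], by simp⟩
  | cons p D1 ih =>
    obtain ⟨Da, ha⟩ := prod_inter_unionL p D2
    obtain ⟨Db, hb⟩ := ih
    exact ⟨Da ++ Db, by
      rw [unionL_cons, Set.union_inter_distrib_right, ha, hb, unionL_append]⟩

/-! ### Avoiding a fixed subword -/

theorem avoid_key {a : σ} {u : List σ} : ∀ {w₁ w₂ : List σ}, a ∉ w₁ →
    (a :: u).Sublist (w₁ ++ a :: w₂) → u.Sublist w₂ := by
  intro w₁
  induction w₁ with
  | nil =>
    intro w₂ _ h
    exact List.cons_sublist_cons.mp h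
  | cons b w₁ ih =>
    intro w₂ h₁ h
    rw [List.cons_append] at h
    cases h with
    | cons _ h' => exact ih (fun hx => h₁ (List.mem_cons_of_mem b hx)) h'
    | cons_cons _ h' => exact absurd (List.mem_cons_self ..) h₁

theorem exists_first (a : σ) : ∀ w : List σ, a ∈ w →
    ∃ w₁ w₂, w = w₁ ++ a :: w₂ ∧ a ∉ w₁ := by
  intro w
  induction w with
  | nil => intro h; simp at h
  | cons b w ih =>
    intro h
    by_cases hb : b = a
    · refine ⟨[], w, ?_, List.not_mem_nil⟩
      rw [hb, List.nil_append]
    · have ha : a ∈ w := by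
        rcases List.mem_cons.1 h with rfl | h
        · exact absurd rfl hb
        · exact h
      obtain ⟨w₁, w₂, he, hn⟩ := ih ha
      refine ⟨b :: w₁, w₂, by rw [List.cons_append, he], ?_⟩
      intro hmem
      rcases List.mem_cons.1 hmem with rfl | hx
      · exact hb rfl
      · exact hn hx

theorem avoid_cons (a : σ) (u : List σ) :
    {w : List σ | ¬ (a :: u).Sublist w} =
      lettersIn {x | x ≠ a} ∪ conc (lettersIn {x | x ≠ a}) (conc {[a]} {w | ¬ u.Sublist w}) := by
  classical
  ext w
  simp only [Set.mem_setOf_eq, Set.mem_union]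
  constructor
  · intro hw
    by_cases ha : a ∈ w
    · right
      obtain ⟨w₁, w₂, rfl, hn⟩ := exists_first a w ha
      refine ⟨w₁, fun x hx hxa => hn (hxa ▸ hx), a :: w₂, ?_, rfl⟩
      refine mem_conc_lit.2 ⟨w₂, fun hu => hw ?_, rfl⟩
      exact (List.Sublist.cons₂ a hu).trans (List.sublist_append_right w₁ (a :: w₂))
    · left
      exact fun x hx hxa => ha (hxa ▸ hx)
  · rintro (h | h)
    · intro hsub
      exact h a (hsub.subset List.mem_cons_self) rfl
    · obtain ⟨w₁, h₁, v, hv, rfl⟩ := h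
      obtain ⟨w₂, h₂, rfl⟩ := mem_conc_lit.1 hv
      intro hsub
      exact h₂ (avoid_key (fun hx => h₁ a hx rfl) hsub)

theorem avoid_unionL (u : List σ) : ∃ D, {w : List σ | ¬ u.Sublist w} = unionL D := by
  induction u with
  | nil =>
    refine ⟨[], ?_⟩
    ext w; simp [List.nil_sublist]
  | cons a u ih =>
    obtain ⟨D, hD⟩ := ih
    refine ⟨[Atom.star {x | x ≠ a}] :: D.map (fun p => Atom.star {x | x ≠ a} :: Atom.lit a :: p), ?_⟩
    rw [avoid_cons, hD, unionL_cons]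
    congr 1
    · rw [prodL_star, prodL_nil, conc_nil_right]
    · rw [conc_unionL {[a]} (Atom.lit a :: ·) (fun p => rfl) D,
        conc_unionL (lettersIn {x | x ≠ a}) (Atom.star {x | x ≠ a} :: ·) (fun p => rfl)
          (D.map (Atom.lit a :: ·)), List.map_map]
      rfl

/-! ### Finite basis via Higman's lemma -/

theorem exists_basis [Fintype σ] (L : Set (List σ))
    (hL : ∀ w ∈ L, ∀ v, List.Sublist v w → v ∈ L) :
    ∃ B : List (List σ), ∀ w, w ∈ L ↔ ∀ u ∈ B, ¬ List.Sublist u w := by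
  classical
  set U := Lᶜ with hU
  set M := {u | u ∈ U ∧ ∀ v ∈ U, v.Sublist u → v = u} with hM
  have hmin : ∀ n (u : List σ), u.length ≤ n → u ∈ U → ∃ m ∈ M, m.Sublist u := by
    intro n
    induction n with
    | zero =>
      intro u hu hU'
      have hnil : u = [] := List.eq_nil_of_length_eq_zero (by omega)
      subst hnil
      exact ⟨[], ⟨hU', fun v _ hv => List.sublist_nil.mp hv⟩, List.Sublist.refl _⟩
    | succ n ih =>
      intro u hu hU'
      by_cases hm : u ∈ M
      · exact ⟨u, hm, List.Sublist.refl _⟩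
      · have hex : ∃ v ∈ U, v.Sublist u ∧ v ≠ u := by
          simp only [hM, Set.mem_setOf_eq] at hm
          push_neg at hm
          obtain ⟨v, hv1, hv2, hv3⟩ := hm hU'
          exact ⟨v, hv1, hv2, hv3⟩
        obtain ⟨v, hv1, hv2, hv3⟩ := hex
        have hlt : v.length < u.length := by
          rcases Nat.lt_or_ge v.length u.length with h | h
          · exact h
          · exact absurd (hv2.eq_of_length (le_antisymm hv2.length_le h)) hv3
        obtain ⟨m, hm1, hm2⟩ := ih v (by omega) hv1
        exact ⟨m, hm1, hm2.trans hv2⟩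
  have hfin : M.Finite := by
    by_contra hinf
    have f := Set.Infinite.natEmbedding M hinf
    have hpwo : (Set.univ : Set σ).PartiallyWellOrderedOn (· = ·) := by
      intro g
      obtain ⟨i, j, hij, hx⟩ := Finite.exists_ne_map_eq_of_infinite g
      rcases Nat.lt_or_ge i j with h | h
      · exact ⟨i, j, h, congrArg Subtype.val hx⟩
      · exact ⟨j, i, lt_of_le_of_ne h (Ne.symm hij), congrArg Subtype.val hx.symm⟩
    have hh := Set.PartiallyWellOrderedOn.partiallyWellOrderedOn_sublistForall₂ (· = ·) hpwo
    obtain ⟨i, j, hij, hsub⟩ := hh (fun n => ⟨(f n : List σ), by simp⟩)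
    change List.SublistForall₂ (· = ·) (f i : List σ) (f j) at hsub
    rw [List.sublistForall₂_iff] at hsub
    obtain ⟨l, hl, hsub⟩ := hsub
    have hl' : (f i : List σ) = l := by
      have := List.forall₂_eq_eq_eq (α := σ)
      exact (this ▸ hl : (f i : List σ) = l)
    subst hl'
    have heq : (f i : List σ) = f j := (f j).2.2 _ (f i).2.1 hsub
    exact absurd (f.injective (Subtype.ext heq)) (Nat.ne_of_lt hij)
  refine ⟨hfin.toFinset.toList, ?_⟩
  intro w
  constructor
  · intro hw u hu hsub
    have huM : u ∈ M := by
      rw [Finset.mem_toList, Set.Finite.mem_toFinset] at hu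
      exact hu
    exact absurd (hL w hw u hsub) huM.1
  · intro h
    by_contra hw
    obtain ⟨m, hm, hsub⟩ := hmin w.length w le_rfl hw
    refine h m ?_ hsub
    rw [Finset.mem_toList, Set.Finite.mem_toFinset]
    exact hm

/-! ### Downward closure and conversion to `altLang` -/

def dcl (X : Set (List σ)) : Set (List σ) := {w | ∃ v ∈ X, w.Sublist v}

theorem dcl_conc (X Y : Set (List σ)) : dcl (conc X Y) = conc (dcl X) (dcl Y) := by
  ext w; constructor
  · rintro ⟨v, ⟨u, hu, x, hx, rfl⟩, hsub⟩
    obtain ⟨l₁, l₂, rfl, h₁, h₂⟩ := List.sublist_append_iff.mp hsub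
    exact ⟨l₁, ⟨u, hu, h₁⟩, l₂, ⟨x, hx, h₂⟩, rfl⟩
  · rintro ⟨l₁, ⟨u, hu, h₁⟩, l₂, ⟨x, hx, h₂⟩, rfl⟩
    exact ⟨u ++ x, ⟨u, hu, x, hx, rfl⟩, h₁.append h₂⟩

theorem dcl_lettersIn (A : Set σ) : dcl (lettersIn A) = lettersIn A := by
  ext w; constructor
  · rintro ⟨v, hv, hsub⟩ x hx
    exact hv x (hsub.subset hx)
  · intro h; exact ⟨w, h, List.Sublist.refl w⟩

theorem dcl_nil : dcl ({[]} : Set (List σ)) = {[]} := by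
  ext w; constructor
  · rintro ⟨v, hv, hsub⟩
    rw [Set.mem_singleton_iff] at hv; subst hv
    exact List.sublist_nil.mp hsub
  · intro h
    rw [Set.mem_singleton_iff] at h; subst h
    exact ⟨[], rfl, List.Sublist.refl _⟩

theorem dcl_lit (a : σ) : dcl ({[a]} : Set (List σ)) = optLetter a := by
  ext w
  simp only [optLetter, Set.mem_insert_iff, Set.mem_singleton_iff]
  constructor
  · rintro ⟨v, hv, hsub⟩
    rw [Set.mem_singleton_iff] at hv; subst hv
    cases hsub with
    | cons _ h => exact Or.inl (List.sublist_nil.mp h)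
    | cons_cons _ h =>
      have := List.sublist_nil.mp h
      subst this
      exact Or.inr rfl
  · rintro (rfl | rfl)
    · exact ⟨[a], rfl, List.nil_sublist _⟩
    · exact ⟨[a], rfl, List.Sublist.refl _⟩

theorem singleton_mem_lettersIn {A : Set σ} {c : σ} (hc : c ∈ A) : [c] ∈ lettersIn A := by
  intro y hy
  rw [List.mem_singleton] at hy; subst hy
  exact hc

theorem conc_absorb {A : Set σ} {c : σ} (hc : c ∈ A) (X : Set (List σ)) :
    conc (lettersIn A) (conc (optLetter c) X) = conc (lettersIn A) X := by
  ext w; constructor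
  · rintro ⟨u, hu, v, hv, rfl⟩
    obtain ⟨o, ho, x, hx, rfl⟩ := hv
    rcases (Set.mem_insert_iff.mp ho) with rfl | ho
    · exact ⟨u, hu, x, hx, by simp⟩
    · rw [Set.mem_singleton_iff] at ho; subst ho
      exact ⟨u ++ [c], append_mem_lettersIn hu (singleton_mem_lettersIn hc), x, hx,
        (List.append_assoc u [c] x).symm⟩
  · rintro ⟨u, hu, x, hx, rfl⟩
    exact ⟨u, hu, x, ⟨[], Set.mem_insert _ _, x, hx, rfl⟩, rfl⟩

theorem prepend_star (A : Set σ) (d : List (Set σ × σ)) (Γ : Set σ) :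
    ∃ d' Γ', conc (lettersIn A) (altLang d Γ) = altLang d' Γ' := by
  rcases A.eq_empty_or_nonempty with rfl | ⟨c, hc⟩
  · exact ⟨d, Γ, by rw [lettersIn_empty, conc_nil_left]⟩
  · exact ⟨(A, c) :: d, Γ, (conc_absorb hc (altLang d Γ)).symm⟩

theorem dcl_prod (p : List (Atom σ)) : ∃ d Γ, dcl (prodL p) = altLang d Γ := by
  induction p with
  | nil =>
    refine ⟨[], ∅, ?_⟩
    rw [prodL_nil, dcl_nil]
    show ({[]} : Set (List σ)) = lettersIn ∅
    rw [lettersIn_empty]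
  | cons x t ih =>
    obtain ⟨d, Γ, hdΓ⟩ := ih
    cases x with
    | star A =>
      have h : dcl (prodL (.star A :: t)) = conc (lettersIn A) (altLang d Γ) := by
        rw [prodL_star, dcl_conc, dcl_lettersIn, hdΓ]
      obtain ⟨d', Γ', h'⟩ := prepend_star A d Γ
      exact ⟨d', Γ', h.trans h'⟩
    | lit a =>
      refine ⟨(∅, a) :: d, Γ, ?_⟩
      rw [prodL_lit, dcl_conc, dcl_lit, hdΓ]
      show conc (optLetter a) (altLang d Γ) =
        conc (lettersIn ∅) (conc (optLetter a) (altLang d Γ))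
      rw [lettersIn_empty, conc_nil_left]

theorem biUnion_cons {α β : Type*} (a : α) (l : List α) (f : α → Set β) :
    (⋃ x ∈ (a :: l), f x) = f a ∪ ⋃ x ∈ l, f x := by
  ext y
  simp [List.mem_cons, or_and_right, exists_or]

end SWC

/-- Every nonempty subword-closed language over a finite alphabet is a finite
union of languages of the form `Σ₁* {ε,a₂} Σ₃* ⋯ Σ_{2q}* {ε,a_{2q}} Σ_{2q+1}*`. -/
theorem subwordClosed_decomposition {σ : Type*} [Fintype σ] (L : Set (List σ))
    (hne : L.Nonempty) (hL : ∀ w ∈ L, ∀ v, List.Sublist v w → v ∈ L) :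
    ∃ D : List (List (Set σ × σ) × Set σ),
      L = ⋃ d ∈ D, altLang d.1 d.2 := by
  classical
  obtain ⟨B, hB⟩ := SWC.exists_basis L hL
  have haux : ∀ us : List (List σ),
      ∃ D, {w : List σ | ∀ u ∈ us, ¬ List.Sublist u w} = SWC.unionL D := by
    intro us
    induction us with
    | nil =>
      refine ⟨[[SWC.Atom.star Set.univ]], ?_⟩
      ext w
      simp only [List.not_mem_nil, false_implies, implies_true, Set.mem_setOf_eq, true_iff]
      rw [SWC.unionL_cons, SWC.unionL_nil, Set.union_empty, SWC.prodL_star, SWC.prodL_nil,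
        SWC.conc_nil_right]
      exact fun a _ => Set.mem_univ a
    | cons u us ih =>
      obtain ⟨D1, h1⟩ := SWC.avoid_unionL u
      obtain ⟨D2, h2⟩ := ih
      obtain ⟨D, hD⟩ := SWC.unionL_inter_unionL D1 D2
      refine ⟨D, ?_⟩
      rw [← hD, ← h1, ← h2]
      ext w
      simp [List.forall_mem_cons]
  obtain ⟨D, hD⟩ := haux B
  have hLD : L = SWC.unionL D := by
    rw [← hD]
    ext w
    simpa using hB w
  have key : ∀ E : List (List (SWC.Atom σ)), ∃ DD : List (List (Set σ × σ) × Set σ),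
      (⋃ p ∈ E, SWC.dcl (SWC.prodL p)) = ⋃ d ∈ DD, altLang d.1 d.2 := by
    intro E
    induction E with
    | nil => exact ⟨[], by simp⟩
    | cons p E ih =>
      obtain ⟨d, Γ, hdΓ⟩ := SWC.dcl_prod p
      obtain ⟨DD, hDD⟩ := ih
      refine ⟨(d, Γ) :: DD, ?_⟩
      rw [SWC.biUnion_cons, SWC.biUnion_cons, hdΓ, hDD]
  have hdcl : L = ⋃ p ∈ D, SWC.dcl (SWC.prodL p) := by
    apply Set.Subset.antisymm
    · intro w hw
      have hw' : w ∈ SWC.unionL D := hLD ▸ hw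
      simp only [SWC.unionL, Set.mem_iUnion] at hw'
      obtain ⟨p, hp, hwp⟩ := hw'
      exact Set.mem_biUnion hp ⟨w, hwp, List.Sublist.refl w⟩
    · intro w hw
      simp only [Set.mem_iUnion] at hw
      obtain ⟨p, hp, v, hv, hsub⟩ := hw
      have hvL : v ∈ L := by
        rw [hLD]
        exact Set.mem_biUnion hp hv
      exact hL v hvL w hsub
  obtain ⟨DD, hDD⟩ := key D
  exact ⟨DD, hdcl.trans hDD⟩
end

section
/- Every subword-closed language over a finite alphabet is a regular language. -/
/-- Kleene star of a language. -/
def kstar {σ : Type*} (L : Set (List σ)) : Set (List σ) :=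
  {w | ∃ ws : List (List σ), (∀ u ∈ ws, u ∈ L) ∧ w = ws.flatten}

/-- Regular languages: the smallest collection containing `∅`, `{ε}` and each
singleton `{[a]}`, closed under union, concatenation and Kleene star. -/
inductive RegularLang {σ : Type*} : Set (List σ) → Prop
  | empty : RegularLang ∅
  | epsilon : RegularLang {([] : List σ)}
  | single (a : σ) : RegularLang {[a]}
  | union {K L : Set (List σ)} : RegularLang K → RegularLang L → RegularLang (K ∪ L)
  | concat {K L : Set (List σ)} : RegularLang K → RegularLang L → RegularLang (conc K L)
  | star {L : Set (List σ)} : RegularLang L → RegularLang (kstar L)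

namespace SWAux

variable {α : Type*} {S : Type*}

/-- Run of an automaton from `p` reading `w`, ending at `q`, with all intermediate
states in `Q`. -/
def trip (st : S → α → S) (Q : Set S) : S → List α → S → Prop
  | p, [], q => p = q
  | p, a :: w, q => (w = [] ∧ st p a = q) ∨ (st p a ∈ Q ∧ trip st Q (st p a) w q)

lemma trip_nil {st : S → α → S} {Q : Set S} {p q : S} : trip st Q p [] q ↔ p = q := Iff.rfl

lemma trip_cons {st : S → α → S} {Q : Set S} {p q : S} {a : α} {w : List α} :
    trip st Q p (a :: w) q ↔ (w = [] ∧ st p a = q) ∨ (st p a ∈ Q ∧ trip st Q (st p a) w q) :=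
  Iff.rfl

lemma trip_mono {st : S → α → S} {Q Q' : Set S} (hQ : Q ⊆ Q') :
    ∀ {w : List α} {p q : S}, trip st Q p w q → trip st Q' p w q := by
  intro w
  induction w with
  | nil => intro p q h; exact h
  | cons a w ih =>
    intro p q h
    rcases h with h | ⟨h1, h2⟩
    · exact Or.inl h
    · exact Or.inr ⟨hQ h1, ih h2⟩

lemma trip_append {st : S → α → S} {Q : Set S} {s : S} (hs : s ∈ Q) :
    ∀ {x : List α} {p : S} {y : List α} {q : S},
      trip st Q p x s → trip st Q s y q → trip st Q p (x ++ y) q := by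
  intro x
  induction x with
  | nil =>
    intro p y q h1 h2
    rw [trip_nil] at h1
    subst h1; exact h2
  | cons a x ih =>
    intro p y q h1 h2
    rcases h1 with ⟨rfl, h1⟩ | ⟨h1, h1'⟩
    · subst h1
      exact Or.inr ⟨hs, h2⟩
    · exact Or.inr ⟨h1, ih h1' h2⟩

lemma trip_univ {st : S → α → S} :
    ∀ {w : List α} {p q : S}, trip st Set.univ p w q ↔ w.foldl st p = q := by
  intro w
  induction w with
  | nil => intro p q; exact Iff.rfl
  | cons a w ih =>
    intro p q
    rw [trip_cons, List.foldl_cons, ← ih]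
    constructor
    · rintro (⟨rfl, rfl⟩ | ⟨-, h⟩)
      · exact trip_nil.mpr rfl
      · exact h
    · intro h
      exact Or.inr ⟨Set.mem_univ _, h⟩

/-- The key Kleene decomposition: adding one more allowed intermediate state. -/
lemma trip_insert {st : S → α → S} {Q : Set S} {r p q : S} :
    {w : List α | trip st (insert r Q) p w q} =
      {w | trip st Q p w q} ∪
        conc {w | trip st Q p w r}
          (conc (kstar {w | trip st Q r w r}) {w | trip st Q r w q}) := by
  ext w
  simp only [Set.mem_setOf_eq, Set.mem_union]
  constructor
  · -- forward direction, by induction on `w` generalizing `p`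
    have key : ∀ (w : List α) (p : S), trip st (insert r Q) p w q →
        trip st Q p w q ∨ ∃ (u : List α) (ws : List (List α)) (v : List α), trip st Q p u r ∧ (∀ m ∈ ws, trip st Q r m r) ∧
          trip st Q r v q ∧ w = u ++ (ws.flatten ++ v) := by
      intro w
      induction w with
      | nil => intro p h; exact Or.inl h
      | cons a w ih =>
        intro p h
        rcases h with ⟨rfl, h⟩ | ⟨h1, h2⟩
        · exact Or.inl (Or.inl ⟨rfl, h⟩)
        · rcases ih _ h2 with h3 | ⟨u, ws, v, hu, hws, hv, rfl⟩
          · rcases h1 with rfl | h1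
            · -- st p a = r
              exact Or.inr ⟨[a], [], w, Or.inl ⟨rfl, rfl⟩, by simp, h3, by simp⟩
            · exact Or.inl (Or.inr ⟨h1, h3⟩)
          · rcases h1 with rfl | h1
            · -- st p a = r : first block becomes [a], u joins the middle
              refine Or.inr ⟨[a], u :: ws, v, Or.inl ⟨rfl, rfl⟩, ?_, hv, by simp⟩
              intro m hm
              rcases List.mem_cons.mp hm with rfl | hm
              · exact hu
              · exact hws _ hm
            · exact Or.inr ⟨a :: u, ws, v, Or.inr ⟨h1, hu⟩, hws, hv, rfl⟩
    intro h
    rcases key w p h with h | ⟨u, ws, v, hu, hws, hv, rfl⟩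
    · exact Or.inl h
    · exact Or.inr ⟨u, hu, ws.flatten ++ v, ⟨ws.flatten, ⟨ws, hws, rfl⟩,
        v, hv, rfl⟩, rfl⟩
  · rintro (h | ⟨u, hu, z, ⟨m, ⟨ws, hws, rfl⟩, v, hv, rfl⟩, rfl⟩)
    · exact trip_mono (Set.subset_insert r Q) h
    · have hmem : r ∈ insert r Q := Set.mem_insert r Q
      have hmid : trip st (insert r Q) r (ws.flatten ++ v) q := by
        clear hu
        induction ws with
        | nil => simpa using trip_mono (Set.subset_insert r Q) hv
        | cons b ws ih =>
          have hb : trip st (insert r Q) r b r :=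
            trip_mono (Set.subset_insert r Q) (hws b (by simp))
          have := ih (fun m hm => hws m (by simp [hm]))
          simpa [List.append_assoc] using trip_append hmem hb this
      exact trip_append hmem (trip_mono (Set.subset_insert r Q) hu) hmid


lemma regular_biUnion {ι : Type*} (s : Finset ι) (f : ι → Set (List α))
    (h : ∀ i ∈ s, RegularLang (f i)) : RegularLang (⋃ i ∈ s, f i) := by
  classical
  induction s using Finset.induction_on with
  | empty => simpa using RegularLang.empty
  | insert _ _ hns ih =>
    rw [Finset.set_biUnion_insert]
    exact RegularLang.union (h _ (Finset.mem_insert_self _ _))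
      (ih fun i hi => h i (Finset.mem_insert_of_mem hi))

lemma trip_empty_iff {st : S → α → S} {p q : S} {w : List α} :
    trip st (∅ : Set S) p w q ↔ (w = [] ∧ p = q) ∨ ∃ a, w = [a] ∧ st p a = q := by
  cases w with
  | nil => simp [trip_nil]
  | cons a w =>
    rw [trip_cons]
    simp only [Set.mem_empty_iff_false, false_and, or_false]
    constructor
    · rintro ⟨rfl, h⟩
      exact Or.inr ⟨a, rfl, h⟩
    · rintro (⟨h, -⟩ | ⟨b, hb, h⟩)
      · exact absurd h (by simp)
      · injection hb with h1 h2
        subst h1; subst h2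
        exact ⟨rfl, h⟩

lemma trip_finset_regular [Fintype α] [Fintype S] (st : S → α → S) (Q : Finset S) (p q : S) :
    RegularLang {w : List α | trip st (↑Q : Set S) p w q} := by
  classical
  induction Q using Finset.induction_on generalizing p q with
  | empty =>
    have hU : RegularLang (⋃ a ∈ Finset.univ.filter (fun a => st p a = q),
        ({[a]} : Set (List α))) :=
      regular_biUnion _ _ (fun a _ => RegularLang.single a)
    by_cases hpq : p = q
    · have he : {w : List α | trip st (↑(∅ : Finset S) : Set S) p w q} =
          {([] : List α)} ∪ ⋃ a ∈ Finset.univ.filter (fun a => st p a = q),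
            ({[a]} : Set (List α)) := by
        ext w
        simp only [Finset.coe_empty, Set.mem_setOf_eq, trip_empty_iff, Set.mem_union,
          Set.mem_singleton_iff, Set.mem_iUnion, Finset.mem_filter, Finset.mem_univ, true_and]
        constructor
        · rintro (⟨rfl, -⟩ | ⟨a, rfl, ha⟩)
          · exact Or.inl rfl
          · exact Or.inr ⟨a, ha, rfl⟩
        · rintro (rfl | ⟨a, ha, rfl⟩)
          · exact Or.inl ⟨rfl, hpq⟩
          · exact Or.inr ⟨a, rfl, ha⟩
      rw [he]
      exact RegularLang.union RegularLang.epsilon hU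
    · have he : {w : List α | trip st (↑(∅ : Finset S) : Set S) p w q} =
          ⋃ a ∈ Finset.univ.filter (fun a => st p a = q), ({[a]} : Set (List α)) := by
        ext w
        simp only [Finset.coe_empty, Set.mem_setOf_eq, trip_empty_iff,
          Set.mem_iUnion, Finset.mem_filter, Finset.mem_univ, true_and,
          Set.mem_singleton_iff]
        constructor
        · rintro (⟨rfl, h⟩ | ⟨a, rfl, ha⟩)
          · exact absurd h hpq
          · exact ⟨a, ha, rfl⟩
        · rintro ⟨a, ha, rfl⟩
          exact Or.inr ⟨a, rfl, ha⟩
      rw [he]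
      exact hU
  | insert _ _ hns ih =>
    rw [Finset.coe_insert, trip_insert]
    exact RegularLang.union (ih _ _)
      (RegularLang.concat (ih _ _) (RegularLang.concat (RegularLang.star (ih _ _)) (ih _ _)))

/-- Languages recognizable by a finite automaton. -/
def Rec {α : Type*} (L : Set (List α)) : Prop :=
  ∃ (S : Type) (_ : Fintype S) (st : S → α → S) (start : S) (acc : Set S),
    L = {w | w.foldl st start ∈ acc}

lemma rec_regular [Fintype α] {L : Set (List α)} (h : Rec L) : RegularLang L := by
  classical
  obtain ⟨S, hfin, st, start, acc, rfl⟩ := h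
  have he : {w : List α | w.foldl st start ∈ acc} =
      ⋃ q ∈ (Set.toFinite acc).toFinset, {w : List α | trip st Set.univ start w q} := by
    ext w
    simp only [Set.mem_setOf_eq, Set.mem_iUnion, Set.Finite.mem_toFinset, trip_univ]
    constructor
    · intro hw; exact ⟨_, hw, rfl⟩
    · rintro ⟨q, hq, rfl⟩; exact hq
  rw [he]
  refine regular_biUnion _ _ (fun q _ => ?_)
  have := trip_finset_regular st Finset.univ start q
  rwa [Finset.coe_univ] at this

lemma rec_univ : Rec (Set.univ : Set (List α)) :=
  ⟨Unit, inferInstance, fun _ _ => (), (), Set.univ, by ext w; simp⟩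

lemma rec_inter {K L : Set (List α)} (hK : Rec K) (hL : Rec L) : Rec (K ∩ L) := by
  obtain ⟨S₁, h₁, st₁, start₁, acc₁, rfl⟩ := hK
  obtain ⟨S₂, h₂, st₂, start₂, acc₂, rfl⟩ := hL
  refine ⟨S₁ × S₂, inferInstance, fun p a => (st₁ p.1 a, st₂ p.2 a), (start₁, start₂),
    {p | p.1 ∈ acc₁ ∧ p.2 ∈ acc₂}, ?_⟩
  have hfold : ∀ (w : List α) (p : S₁ × S₂),
      w.foldl (fun p a => (st₁ p.1 a, st₂ p.2 a)) p = (w.foldl st₁ p.1, w.foldl st₂ p.2) := by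
    intro w
    induction w with
    | nil => intro p; rfl
    | cons a w ih => intro p; simp [ih]
  ext w
  simp [hfold]


/-- The automaton tracking the longest prefix of `w₀` matched greedily so far. -/
def avoidStep [DecidableEq α] (w₀ : List α) (i : Fin (w₀.length + 1)) (a : α) :
    Fin (w₀.length + 1) :=
  if w₀[(i : ℕ)]? = some a then
    ⟨min ((i : ℕ) + 1) w₀.length, Nat.lt_succ_of_le (min_le_right _ _)⟩
  else i

lemma avoid_foldl [DecidableEq α] (w₀ : List α) :
    ∀ (x : List α) (i : Fin (w₀.length + 1)),
      ((x.foldl (avoidStep w₀) i : Fin (w₀.length + 1)) : ℕ) = w₀.length ↔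
        (w₀.drop i).Sublist x := by
  intro x
  induction x with
  | nil =>
    intro i
    simp only [List.foldl_nil, List.sublist_nil, List.drop_eq_nil_iff]
    have := i.isLt
    omega
  | cons a x ih =>
    intro i
    rw [List.foldl_cons, ih]
    unfold avoidStep
    split_ifs with h
    · obtain ⟨hlt, hget⟩ := List.getElem?_eq_some_iff.mp h
      have hmin : min ((i : ℕ) + 1) w₀.length = (i : ℕ) + 1 := by omega
      rw [List.drop_eq_getElem_cons hlt, hget]
      show (List.drop (min ((i : ℕ) + 1) w₀.length) w₀).Sublist x ↔ _
      rw [hmin]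
      exact (List.cons_sublist_cons).symm
    · constructor
      · intro hs
        exact hs.trans (List.sublist_cons_self a x)
      · intro hs
        rcases Nat.lt_or_ge (i : ℕ) w₀.length with hlt | hge
        · rw [List.drop_eq_getElem_cons hlt] at hs ⊢
          cases hs with
          | cons _ h' => exact h'
          | cons_cons => exact absurd (List.getElem?_eq_some_iff.mpr ⟨hlt, rfl⟩) h
        · rw [List.drop_eq_nil_iff.mpr hge] at hs ⊢
          exact List.nil_sublist x

lemma rec_avoid [DecidableEq α] (w₀ : List α) : Rec {x : List α | ¬ w₀.Sublist x} := by
  refine ⟨Fin (w₀.length + 1), inferInstance, avoidStep w₀, ⟨0, Nat.succ_pos _⟩,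
    {j | (j : ℕ) ≠ w₀.length}, ?_⟩
  ext x
  simp only [Set.mem_setOf_eq]
  have h := avoid_foldl w₀ x ⟨0, Nat.succ_pos _⟩
  rw [show ((⟨0, Nat.succ_pos _⟩ : Fin (w₀.length + 1)) : ℕ) = 0 from rfl, List.drop_zero] at h
  exact (not_congr h).symm

lemma exists_minimal (U : Set (List α)) {w : List α} (hw : w ∈ U) :
    ∃ u ∈ U, u.Sublist w ∧ ∀ v ∈ U, v.Sublist u → v = u := by
  have key : ∀ (N : ℕ) (w : List α), w.length ≤ N → w ∈ U →
      ∃ u ∈ U, u.Sublist w ∧ ∀ v ∈ U, v.Sublist u → v = u := by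
    intro N
    induction N with
    | zero =>
      intro w hlen hw
      refine ⟨w, hw, List.Sublist.refl w, fun v hv hs => ?_⟩
      have h1 := hs.length_le
      exact hs.eq_of_length (by omega)
    | succ N ih =>
      intro w hlen hw
      by_cases h : ∀ v ∈ U, v.Sublist w → v = w
      · exact ⟨w, hw, List.Sublist.refl w, h⟩
      · push_neg at h
        obtain ⟨v, hv, hvw, hne⟩ := h
        have hlt : v.length < w.length :=
          lt_of_le_of_ne hvw.length_le fun e => hne (hvw.eq_of_length e)
        obtain ⟨u, hu, hus, hmin⟩ := ih v (by omega) hv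
        exact ⟨u, hu, hus.trans hvw, hmin⟩
  exact key w.length w le_rfl hw

lemma sublist_of_sublistForall₂ {l₁ l₂ : List α}
    (h : List.SublistForall₂ (· = ·) l₁ l₂) : l₁.Sublist l₂ := by
  obtain ⟨l, hforall, hsub⟩ := List.sublistForall₂_iff.mp h
  rwa [show l₁ = l from List.forall₂_eq_eq_eq ▸ hforall]

end SWAux

open SWAux in
/-- Every subword-closed language over a finite alphabet is regular. -/
theorem subwordClosed_isRegular {σ : Type*} [Fintype σ] (L : Set (List σ))
    (hL : ∀ w ∈ L, ∀ v, List.Sublist v w → v ∈ L) : RegularLang L := by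
  classical
  set M : Set (List σ) := {u | u ∉ L ∧ ∀ v ∉ L, v.Sublist u → v = u} with hMdef
  have heq_pwo : (Set.univ : Set σ).PartiallyWellOrderedOn (· = ·) := by
    intro f
    obtain ⟨m, n, hne, he⟩ := Finite.exists_ne_map_eq_of_infinite f
    rcases hne.lt_or_gt with h | h
    · exact ⟨m, n, h, congrArg Subtype.val he⟩
    · exact ⟨n, m, h, congrArg Subtype.val he.symm⟩
  have hMfin : M.Finite := by
    by_contra hinf
    have f := Set.Infinite.natEmbedding M hinf
    have hpwo := Set.PartiallyWellOrderedOn.partiallyWellOrderedOn_sublistForall₂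
      (r := ((· = ·) : σ → σ → Prop)) heq_pwo
    obtain ⟨m, n, hmn, hr⟩ := hpwo (fun k => ⟨(f k).1, fun x _ => Set.mem_univ x⟩)
    have hsub : ((f m).1).Sublist (f n).1 := sublist_of_sublistForall₂ hr
    have h2 := (f n).2
    have heq : (f m).1 = (f n).1 := h2.2 _ (f m).2.1 hsub
    exact absurd (f.injective (Subtype.ext heq)) (Nat.ne_of_lt hmn)
  have hLeq : L = ⋂ u ∈ hMfin.toFinset, {x : List σ | ¬ u.Sublist x} := by
    ext x
    simp only [Set.mem_iInter, Set.Finite.mem_toFinset, Set.mem_setOf_eq]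
    constructor
    · intro hx u hu hsub
      exact hu.1 (hL x hx u hsub)
    · intro h
      by_contra hx
      obtain ⟨u, hu, hsub, hmin⟩ := exists_minimal {v : List σ | v ∉ L} hx
      exact h u ⟨hu, fun v hv hs => hmin v hv hs⟩ hsub
  rw [hLeq]
  apply rec_regular
  have key : ∀ s : Finset (List σ), Rec (⋂ u ∈ s, {x : List σ | ¬ u.Sublist x}) := by
    intro s
    induction s using Finset.induction_on with
    | empty => simpa using rec_univ
    | insert _ _ hns ih =>
      rw [Finset.set_biInter_insert]
      exact rec_inter (rec_avoid _) ih
  exact key _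
end

section
/- Let F = {(x,x) : x ∈ [0,1]} ∪ {(x+1, x) : x ∈ [0,1]}. Then Sub(F) consists precisely of all permutations having at most one descent, and the basis of Sub(F) is {321, 2143, 3142}. -/
/-- The standard figure of a `0/±1` matrix `M` (indexed first by column,
bottom-to-top rows): an open increasing segment in cell `(k,ℓ)` when
`M k ℓ = 1`, and an open decreasing segment when `M k ℓ = -1`. -/
def stdFigure {t u : ℕ} (M : Matrix (Fin t) (Fin u) ℤ) : Set (ℝ × ℝ) :=
  {p | ∃ (k : Fin t) (l : Fin u) (x : ℝ), 0 < x ∧ x < 1 ∧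
    ((M k l = 1 ∧ p = ((k : ℝ) + x, (l : ℝ) + x)) ∨
     (M k l = -1 ∧ p = ((k : ℝ) + x, (l : ℝ) + 1 - x)))}

/-- The permutation `π` can be drawn on the figure `F`: there are points of `F`
with strictly increasing `x`-coordinates (in particular no two share a vertical
or horizontal line) whose `y`-coordinates are ordered according to `π`. -/
def DrawnOn {n : ℕ} (π : Equiv.Perm (Fin n)) (F : Set (ℝ × ℝ)) : Prop :=
  ∃ p : Fin n → ℝ × ℝ, (∀ i, p i ∈ F) ∧
    (∀ i j, i < j → (p i).1 < (p j).1) ∧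
    ∀ i j, π i < π j ↔ (p i).2 < (p j).2

/-- `π` contains `σ`: `π` has a subsequence order-isomorphic to `σ`. -/
def Contains {n k : ℕ} (π : Equiv.Perm (Fin n)) (σ : Equiv.Perm (Fin k)) : Prop :=
  ∃ f : Fin k → Fin n, StrictMono f ∧ ∀ i j, σ i < σ j ↔ π (f i) < π (f j)

/-- The set of descents of `π`. -/
def descentSet {n : ℕ} (π : Equiv.Perm (Fin n)) : Set ℕ :=
  {i | ∃ h : i + 1 < n, π ⟨i + 1, h⟩ < π ⟨i, Nat.lt_of_succ_lt h⟩}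

/-- The permutation `321`. -/
def p321 : Equiv.Perm (Fin 3) := ⟨![2, 1, 0], ![2, 1, 0], by decide, by decide⟩

/-- The permutation `2143`. -/
def p2143 : Equiv.Perm (Fin 4) := ⟨![1, 0, 3, 2], ![1, 0, 3, 2], by decide, by decide⟩

/-- The permutation `3142`. -/
def p3142 : Equiv.Perm (Fin 4) := ⟨![2, 0, 3, 1], ![1, 3, 0, 2], by decide, by decide⟩

/-- The figure `{(x,x) : x ∈ [0,1]} ∪ {(x+1,x) : x ∈ [0,1]}`. -/
def twoSegments : Set (ℝ × ℝ) :=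
  {p | (p.1 ∈ Set.Icc (0 : ℝ) 1 ∧ p.2 = p.1) ∨
       (p.2 ∈ Set.Icc (0 : ℝ) 1 ∧ p.1 = p.2 + 1)}

lemma contains_trans {n k m : ℕ} {π : Equiv.Perm (Fin n)} {σ : Equiv.Perm (Fin k)}
    {τ : Equiv.Perm (Fin m)} (h1 : Contains π σ) (h2 : Contains σ τ) : Contains π τ := by
  obtain ⟨g, hg, hgi⟩ := h1
  obtain ⟨f, hf, hfi⟩ := h2
  exact ⟨g ∘ f, hg.comp hf, fun i j => (hfi i j).trans (hgi (f i) (f j))⟩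

lemma contains_le {n k : ℕ} {π : Equiv.Perm (Fin n)} {σ : Equiv.Perm (Fin k)}
    (h : Contains π σ) : k ≤ n := by
  obtain ⟨f, hf, -⟩ := h
  simpa using Fintype.card_le_of_injective f hf.injective

lemma drawn_mono {n k : ℕ} {π : Equiv.Perm (Fin n)} {σ : Equiv.Perm (Fin k)}
    {F : Set (ℝ × ℝ)} (h : DrawnOn π F) (hc : Contains π σ) : DrawnOn σ F := by
  obtain ⟨p, hmem, hx, hy⟩ := h
  obtain ⟨f, hf, hfi⟩ := hc
  exact ⟨p ∘ f, fun i => hmem (f i), fun i j hij => hx _ _ (hf hij),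
    fun i j => (hfi i j).trans (hy (f i) (f j))⟩

lemma not_contains_2143_321 : ¬ Contains p2143 p321 := by
  unfold Contains StrictMono; decide

lemma not_contains_3142_321 : ¬ Contains p3142 p321 := by
  unfold Contains StrictMono; decide
noncomputable def yval (n : ℕ) (v : Fin n) : ℝ := ((v : ℝ) + 1) / ((n : ℝ) + 1)

lemma yval_pos {n : ℕ} (v : Fin n) : 0 < yval n v := by
  unfold yval; positivity

lemma yval_lt_one {n : ℕ} (v : Fin n) : yval n v < 1 := by
  unfold yval
  rw [div_lt_one (by positivity)]
  have : ((v : ℕ) : ℝ) < (n : ℝ) := by exact_mod_cast v.2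
  linarith

lemma yval_lt_iff {n : ℕ} {v w : Fin n} : yval n v < yval n w ↔ v < w := by
  unfold yval
  rw [div_lt_div_iff_of_pos_right (by positivity)]
  rw [Fin.lt_def]
  constructor
  · intro h
    have : ((v:ℕ):ℝ) < ((w:ℕ):ℝ) := by linarith
    exact_mod_cast this
  · intro h; have : ((v:ℕ):ℝ) < ((w:ℕ):ℝ) := by exact_mod_cast h
    linarith

/-- Monotone along a run with no descent inside. -/
lemma run_mono {n : ℕ} (π : Equiv.Perm (Fin n)) (i j : Fin n) (hij : i < j)
    (h : ∀ k : ℕ, (i : ℕ) ≤ k → k < (j : ℕ) → ∀ hk : k + 1 < n,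
      π ⟨k, Nat.lt_of_succ_lt hk⟩ < π ⟨k + 1, hk⟩) : π i < π j := by
  obtain ⟨j, hjn⟩ := j
  induction j with
  | zero => exact absurd hij (by simp [Fin.lt_def])
  | succ m ih =>
    have hm : m < n := Nat.lt_of_succ_lt hjn
    have hile : (i : ℕ) ≤ m := by
      have := hij; simp only [Fin.lt_def, Fin.val_mk] at this; omega
    have hstep : π ⟨m, hm⟩ < π ⟨m + 1, hjn⟩ :=
      h m hile (by simp only [Fin.val_mk]; omega) hjn
    rcases Nat.lt_or_ge (i : ℕ) m with him | him
    · exact lt_trans (ih hm (by simp only [Fin.lt_def, Fin.val_mk]; omega)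
        (fun k hk1 hk2 hk3 => h k hk1 (by simp only [Fin.val_mk] at hk2 ⊢; omega) hk3)) hstep
    · have : i = (⟨m, hm⟩ : Fin n) := Fin.ext (by simp only [Fin.val_mk]; omega)
      rw [this]; exact hstep

/-- A permutation with at most one descent can be drawn on the two segments. -/
lemma drawn_of_subsingleton {n : ℕ} (π : Equiv.Perm (Fin n))
    (h : (descentSet π).Subsingleton) : DrawnOn π twoSegments := by
  classical
  set d₀ : ℕ := if hd : ∃ d, d ∈ descentSet π then hd.choose else n with hd₀
  -- every index other than d₀ is an ascent
  have key : ∀ k : ℕ, k ≠ d₀ → ∀ hk : k + 1 < n,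
      π ⟨k, Nat.lt_of_succ_lt hk⟩ < π ⟨k + 1, hk⟩ := by
    intro k hkd hk
    have hknd : k ∉ descentSet π := by
      intro hmem
      apply hkd
      rw [hd₀]
      split
      · next hd => exact h hmem hd.choose_spec
      · next hd => exact absurd ⟨k, hmem⟩ hd
    have hne : π ⟨k, Nat.lt_of_succ_lt hk⟩ ≠ π ⟨k + 1, hk⟩ := by
      intro he
      have := π.injective he
      simp only [Fin.mk.injEq] at this
      omega
    rcases lt_or_gt_of_ne hne with h1 | h1
    · exact h1
    · exact absurd ⟨hk, h1⟩ hknd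
  refine ⟨fun i => if (i : ℕ) ≤ d₀ then (yval n (π i), yval n (π i))
      else (yval n (π i) + 1, yval n (π i)), ?_, ?_, ?_⟩
  · intro i
    by_cases hi : (i : ℕ) ≤ d₀ <;> simp only [hi, if_pos, if_neg, ite_true, ite_false]
    · exact Or.inl ⟨⟨(yval_pos _).le, (yval_lt_one _).le⟩, rfl⟩
    · exact Or.inr ⟨⟨(yval_pos _).le, (yval_lt_one _).le⟩, rfl⟩
  · intro i j hij
    by_cases hi : (i : ℕ) ≤ d₀ <;> by_cases hj : (j : ℕ) ≤ d₀ <;>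
        simp only [hi, hj, ite_true, ite_false]
    · -- both in the first run
      have : π i < π j := run_mono π i j hij (fun k hk1 hk2 hk3 => key k (by omega) hk3)
      show yval n (π i) < yval n (π j)
      exact yval_lt_iff.mpr this
    · -- i in first run, j in second
      have h1 := yval_lt_one (π i)
      have h2 := yval_pos (π j)
      show yval n (π i) < yval n (π j) + 1
      linarith
    · -- impossible: i > d₀ ≥ j but i < j
      exact absurd hij (by rw [Fin.lt_def]; omega)
    · have : π i < π j := run_mono π i j hij (fun k hk1 hk2 hk3 => key k (by omega) hk3)
      have h2 := yval_lt_iff.mpr this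
      show yval n (π i) + 1 < yval n (π j) + 1
      linarith
  · intro i j
    by_cases hi : (i : ℕ) ≤ d₀ <;> by_cases hj : (j : ℕ) ≤ d₀ <;>
      simp only [hi, hj, ite_true, ite_false] <;> exact yval_lt_iff.symm

/-- In a drawing on the two segments, an inversion forces the left point on
segment 1 and the right point on segment 2. -/
lemma inv_seg {n : ℕ} {p : Fin n → ℝ × ℝ} (hmem : ∀ i, p i ∈ twoSegments)
    (hx : ∀ i j, i < j → (p i).1 < (p j).1) {i j : Fin n} (hij : i < j)
    (hinv : (p j).2 < (p i).2) :
    ((p i).2 = (p i).1 ∧ (p i).1 ≤ 1) ∧ ((p j).1 = (p j).2 + 1 ∧ 0 ≤ (p j).2) := by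
  have hxij := hx i j hij
  rcases hmem i with ⟨⟨hi0, hi1⟩, hie⟩ | ⟨⟨hi0, hi1⟩, hie⟩ <;>
    rcases hmem j with ⟨⟨hj0, hj1⟩, hje⟩ | ⟨⟨hj0, hj1⟩, hje⟩
  · exact absurd hinv (by rw [hie, hje]; linarith)
  · exact ⟨⟨hie, hi1⟩, hje, hj0⟩
  · exact absurd hxij (by rw [hie]; linarith)
  · rw [hie, hje] at hxij
    exact absurd hinv (by linarith)

lemma not_drawn_321 : ¬ DrawnOn p321 twoSegments := by
  rintro ⟨p, hmem, hx, hy⟩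
  have h01 : (p 1).2 < (p 0).2 := (hy 1 0).mp (by decide)
  have h12 : (p 2).2 < (p 1).2 := (hy 2 1).mp (by decide)
  have A := inv_seg hmem hx (show (0:Fin 3) < 1 by decide) h01
  have B := inv_seg hmem hx (show (1:Fin 3) < 2 by decide) h12
  -- point 1 is on both segments: contradiction
  have e1 := A.2.1
  have e2 := B.1.1
  have := A.2.2
  linarith [e1, e2]

/-- If `π 0 > π 1` and `π 2 > π 3` then `π` (of length 4) is not drawable. -/
lemma not_drawn_fourpat (π : Equiv.Perm (Fin 4)) (h1 : π 1 < π 0) (h2 : π 3 < π 2) :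
    ¬ DrawnOn π twoSegments := by
  rintro ⟨p, hmem, hx, hy⟩
  have h01 : (p 1).2 < (p 0).2 := (hy 1 0).mp h1
  have h23 : (p 3).2 < (p 2).2 := (hy 3 2).mp h2
  have A := inv_seg hmem hx (show (0:Fin 4) < 1 by decide) h01
  have B := inv_seg hmem hx (show (2:Fin 4) < 3 by decide) h23
  -- point 1 on segment 2, point 2 on segment 1, but x₁ < x₂
  have hx12 := hx 1 2 (by decide)
  have e1 := A.2.1
  have hy1 := A.2.2
  have e2 := B.1.1
  have hx2 := B.1.2
  linarith

lemma contains321 {n : ℕ} (π : Equiv.Perm (Fin n)) (x0 x1 x2 : Fin n)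
    (h01 : x0 < x1) (h12 : x1 < x2) (v1 : π x1 < π x0) (v2 : π x2 < π x1) :
    Contains π p321 := by
  have v3 := v2.trans v1
  refine ⟨![x0, x1, x2], ?_, ?_⟩
  · intro a b hab
    fin_cases a <;> fin_cases b <;>
      first | exact absurd hab (by decide) | exact h01 | exact h12 | exact h01.trans h12
  · intro i j
    fin_cases i <;> fin_cases j <;>
      (first | refine iff_of_true (by decide) ?_ | refine iff_of_false (by decide) ?_) <;>
      first
        | exact v1 | exact v2 | exact v3
        | exact asymm v1 | exact asymm v2 | exact asymm v3
        | exact lt_irrefl _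

lemma contains2143 {n : ℕ} (π : Equiv.Perm (Fin n)) (x0 x1 x2 x3 : Fin n)
    (h01 : x0 < x1) (h12 : x1 < x2) (h23 : x2 < x3)
    (w1 : π x1 < π x0) (w2 : π x0 < π x3) (w3 : π x3 < π x2) :
    Contains π p2143 := by
  have v10 := w1
  have v03 := w2
  have v32 := w3
  have v02 := w2.trans w3
  have v12 := w1.trans v02
  have v13 := w1.trans w2
  refine ⟨![x0, x1, x2, x3], ?_, ?_⟩
  · intro a b hab
    fin_cases a <;> fin_cases b <;>
      first
        | exact absurd hab (by decide)
        | exact h01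
        | exact h12
        | exact h23
        | exact h01.trans h12
        | exact h12.trans h23
        | exact (h01.trans h12).trans h23
  · intro i j
    fin_cases i <;> fin_cases j <;>
      (first | refine iff_of_true (by decide) ?_ | refine iff_of_false (by decide) ?_) <;>
      first
        | exact v10 | exact v03 | exact v32 | exact v02 | exact v12 | exact v13
        | exact asymm v10 | exact asymm v03 | exact asymm v32 | exact asymm v02
        | exact asymm v12 | exact asymm v13
        | exact lt_irrefl _

lemma contains3142 {n : ℕ} (π : Equiv.Perm (Fin n)) (x0 x1 x2 x3 : Fin n)
    (h01 : x0 < x1) (h12 : x1 < x2) (h23 : x2 < x3)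
    (w1 : π x1 < π x3) (w2 : π x3 < π x0) (w3 : π x0 < π x2) :
    Contains π p3142 := by
  have v13 := w1
  have v30 := w2
  have v02 := w3
  have v10 := w1.trans w2
  have v32 := w2.trans w3
  have v12 := v10.trans w3
  refine ⟨![x0, x1, x2, x3], ?_, ?_⟩
  · intro a b hab
    fin_cases a <;> fin_cases b <;>
      first
        | exact absurd hab (by decide)
        | exact h01
        | exact h12
        | exact h23
        | exact h01.trans h12
        | exact h12.trans h23
        | exact (h01.trans h12).trans h23
  · intro i j
    fin_cases i <;> fin_cases j <;>
      (first | refine iff_of_true (by decide) ?_ | refine iff_of_false (by decide) ?_) <;>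
      first
        | exact v13 | exact v30 | exact v02 | exact v10 | exact v32 | exact v12
        | exact asymm v13 | exact asymm v30 | exact asymm v02 | exact asymm v10
        | exact asymm v32 | exact asymm v12
        | exact lt_irrefl _

lemma two_descents {n : ℕ} (π : Equiv.Perm (Fin n)) {i j : ℕ}
    (hi : i ∈ descentSet π) (hj : j ∈ descentSet π) (hij : i < j) :
    Contains π p321 ∨ Contains π p2143 ∨ Contains π p3142 := by
  obtain ⟨hi1, hiv⟩ := hi
  obtain ⟨hj1, hjv⟩ := hj
  set I : Fin n := ⟨i, Nat.lt_of_succ_lt hi1⟩ with hI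
  set I1 : Fin n := ⟨i + 1, hi1⟩ with hI1
  set J : Fin n := ⟨j, Nat.lt_of_succ_lt hj1⟩ with hJ
  set J1 : Fin n := ⟨j + 1, hj1⟩ with hJ1
  have hII1 : I < I1 := by simp [hI, hI1, Fin.lt_def]
  have hJJ1 : J < J1 := by simp [hJ, hJ1, Fin.lt_def]
  rcases eq_or_lt_of_le (show i + 1 ≤ j from hij) with he | hlt
  · -- adjacent descents: 321
    have hI1J : I1 = J := Fin.ext (by simp [hI1, hJ]; omega)
    left
    refine contains321 π I I1 J1 hII1 (by rw [hI1J]; exact hJJ1) hiv ?_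
    rw [hI1J]; exact hjv
  · -- i+1 < j
    have hI1J : I1 < J := by simp [hI1, hJ, Fin.lt_def]; omega
    have hIJ : I < J := hII1.trans hI1J
    have hIJ1 : I < J1 := hIJ.trans hJJ1
    have hI1J1 : I1 < J1 := hI1J.trans hJJ1
    have hne : ∀ {x y : Fin n}, x ≠ y → π x ≠ π y := fun hxy he => hxy (π.injective he)
    rcases lt_or_gt_of_ne (hne (x := I1) (y := J) hI1J.ne) with hbc | hbc
    · -- b < c
      rcases lt_or_gt_of_ne (hne (x := I) (y := J) hIJ.ne) with hac | hac
      · -- a < c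
        rcases lt_or_gt_of_ne (hne (x := I) (y := J1) hIJ1.ne) with had | had
        · -- a < d : 2143
          exact Or.inr (Or.inl (contains2143 π I I1 J J1 hII1 hI1J hJJ1 hiv had hjv))
        · -- d < a
          rcases lt_or_gt_of_ne (hne (x := I1) (y := J1) hI1J1.ne) with hbd | hbd
          · -- b < d : 3142
            exact Or.inr (Or.inr (contains3142 π I I1 J J1 hII1 hI1J hJJ1 hbd had hac))
          · -- d < b : 321 on I, I1, J1
            exact Or.inl (contains321 π I I1 J1 hII1 hI1J1 hiv hbd)
      · -- c < a : 321 on I, J, J1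
        exact Or.inl (contains321 π I J J1 hIJ hJJ1 hac hjv)
    · -- c < b : 321 on I, I1, J
      exact Or.inl (contains321 π I I1 J hII1 hI1J hiv hbc)

lemma not_drawn_2143 : ¬ DrawnOn p2143 twoSegments :=
  not_drawn_fourpat p2143 (by decide) (by decide)

lemma not_drawn_3142 : ¬ DrawnOn p3142 twoSegments :=
  not_drawn_fourpat p3142 (by decide) (by decide)

lemma avoid_of_drawn {n : ℕ} {π : Equiv.Perm (Fin n)} (h : DrawnOn π twoSegments) :
    ¬Contains π p321 ∧ ¬Contains π p2143 ∧ ¬Contains π p3142 :=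
  ⟨fun hc => not_drawn_321 (drawn_mono h hc),
   fun hc => not_drawn_2143 (drawn_mono h hc),
   fun hc => not_drawn_3142 (drawn_mono h hc)⟩

lemma subsingleton_of_avoid {n : ℕ} {π : Equiv.Perm (Fin n)}
    (h : ¬Contains π p321 ∧ ¬Contains π p2143 ∧ ¬Contains π p3142) :
    (descentSet π).Subsingleton := by
  by_contra hns
  rw [Set.not_subsingleton_iff] at hns
  obtain ⟨x, hx, y, hy, hxy⟩ := hns
  have : Contains π p321 ∨ Contains π p2143 ∨ Contains π p3142 := by
    rcases hxy.lt_or_gt with hl | hl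
    · exact two_descents π hx hy hl
    · exact two_descents π hy hx hl
  tauto

lemma main_iffs {n : ℕ} (π : Equiv.Perm (Fin n)) :
    (DrawnOn π twoSegments ↔ (descentSet π).Subsingleton) ∧
    (DrawnOn π twoSegments ↔
      ¬Contains π p321 ∧ ¬Contains π p2143 ∧ ¬Contains π p3142) := by
  constructor
  · exact ⟨fun h => subsingleton_of_avoid (avoid_of_drawn h), drawn_of_subsingleton π⟩
  · exact ⟨avoid_of_drawn, fun h => drawn_of_subsingleton π (subsingleton_of_avoid h)⟩

/-- `Sub(F)`, for `F` the union of the two parallel increasing segments, is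
exactly the class of permutations with at most one descent, its members are
exactly the permutations avoiding `321`, `2143` and `3142`, and these three
permutations form the basis: each fails to be drawable on `F` while all of its
proper subpermutations are drawable on `F`. -/
theorem twoSegments_atMostOneDescent :
    (∀ (n : ℕ) (π : Equiv.Perm (Fin n)),
        (DrawnOn π twoSegments ↔ (descentSet π).Subsingleton) ∧
        (DrawnOn π twoSegments ↔
          ¬Contains π p321 ∧ ¬Contains π p2143 ∧ ¬Contains π p3142)) ∧
      (¬DrawnOn p321 twoSegments ∧
        ∀ (k : ℕ) (σ : Equiv.Perm (Fin k)), k < 3 → Contains p321 σ →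
          DrawnOn σ twoSegments) ∧
      (¬DrawnOn p2143 twoSegments ∧
        ∀ (k : ℕ) (σ : Equiv.Perm (Fin k)), k < 4 → Contains p2143 σ →
          DrawnOn σ twoSegments) ∧
      (¬DrawnOn p3142 twoSegments ∧
        ∀ (k : ℕ) (σ : Equiv.Perm (Fin k)), k < 4 → Contains p3142 σ →
          DrawnOn σ twoSegments) := by
  refine ⟨fun n π => main_iffs π, ⟨not_drawn_321, ?_⟩, ⟨not_drawn_2143, ?_⟩,
    ⟨not_drawn_3142, ?_⟩⟩
  · intro k σ hk _
    refine (main_iffs σ).2.mpr ⟨fun h => ?_, fun h => ?_, fun h => ?_⟩ <;>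
      have := contains_le h <;> omega
  · intro k σ hk hc
    refine (main_iffs σ).2.mpr
      ⟨fun h => not_contains_2143_321 (contains_trans hc h), fun h => ?_, fun h => ?_⟩ <;>
      have := contains_le h <;> omega
  · intro k σ hk hc
    refine (main_iffs σ).2.mpr
      ⟨fun h => not_contains_3142_321 (contains_trans hc h), fun h => ?_, fun h => ?_⟩ <;>
      have := contains_le h <;> omega
end

section
/- Let F = {(x, sin x) : x ∈ ℝ}. Then Sub(F) is the set of all permutations. -/
/-- Every permutation can be drawn on the graph of the sine function. -/
theorem sin_figure_all_permutations (n : ℕ) (π : Equiv.Perm (Fin n)) :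
    DrawnOn π {p : ℝ × ℝ | p.2 = Real.sin p.1} := by

  classical
  set c : Fin n → ℝ := fun i => ((π i : ℕ) + 1 : ℝ) / (n + 1) with hc
  have hn1 : (0:ℝ) < (n:ℝ) + 1 := by positivity
  have hc0 : ∀ i, 0 < c i := by
    intro i
    apply div_pos (by positivity) hn1
  have hc1 : ∀ i, c i ≤ 1 := by
    intro i
    rw [hc, div_le_one hn1]
    have : (π i : ℕ) < n := (π i).isLt
    have : ((π i : ℕ) : ℝ) < (n : ℝ) := by exact_mod_cast this
    linarith
  have hsin : ∀ i, Real.sin (Real.arcsin (c i)) = c i := by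
    intro i
    exact Real.sin_arcsin (by linarith [hc0 i]) (hc1 i)
  refine ⟨fun i => (Real.arcsin (c i) + (i : ℕ) * (2 * Real.pi), c i), ?_, ?_, ?_⟩
  · intro i
    simp only [Set.mem_setOf_eq]
    rw [Real.sin_add_nat_mul_two_pi, hsin]
  · intro i j hij
    simp only
    have h1 : Real.arcsin (c i) ≤ Real.pi / 2 := Real.arcsin_le_pi_div_two _
    have h2 : -(Real.pi / 2) ≤ Real.arcsin (c j) := Real.neg_pi_div_two_le_arcsin _
    have hij' : (i : ℕ) + 1 ≤ (j : ℕ) := hij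
    have hij'' : ((i : ℕ) : ℝ) + 1 ≤ ((j : ℕ) : ℝ) := by exact_mod_cast hij'
    nlinarith [Real.pi_pos]
  · intro i j
    simp only
    rw [hc]
    rw [div_lt_div_iff_of_pos_right hn1, add_lt_add_iff_right]
    rw [Nat.cast_lt]
    exact Iff.symm Fin.lt_iff_val_lt_val
end

section
/- The union of finitely many partially well-ordered permutation classes is partially well ordered, and every partially well-ordered permutation class can be expressed as a finite union of atomic classes. -/
/-- A permutation of some finite length. -/
abbrev Perm' := Σ n : ℕ, Equiv.Perm (Fin n)

/-- `PermLe σ π`: `π` contains (involves) the pattern `σ`. -/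
def PermLe (σ π : Perm') : Prop :=
  ∃ f : Fin σ.1 → Fin π.1, StrictMono f ∧
    ∀ i j, σ.2 i < σ.2 j ↔ π.2 (f i) < π.2 (f j)

/-- A permutation class: a set of permutations downward closed under containment. -/
def IsPermClass (C : Set Perm') : Prop :=
  ∀ π ∈ C, ∀ σ, PermLe σ π → σ ∈ C

/-- A set of permutations is partially well ordered if it contains no infinite
antichain under the containment order. -/
def PwoClass (C : Set Perm') : Prop :=
  ¬∃ A : Set Perm', A ⊆ C ∧ A.Infinite ∧ IsAntichain PermLe A

/-- `C` is atomic (join-irreducible): it is not the union of two proper subclasses. -/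
def AtomicClass (C : Set Perm') : Prop :=
  ¬∃ D E : Set Perm', IsPermClass D ∧ IsPermClass E ∧ D ⊂ C ∧ E ⊂ C ∧ C = D ∪ E

lemma permLe_refl (σ : Perm') : PermLe σ σ :=
  ⟨id, strictMono_id, fun _ _ => Iff.rfl⟩

lemma permLe_trans {σ π τ : Perm'} (h1 : PermLe σ π) (h2 : PermLe π τ) : PermLe σ τ := by
  obtain ⟨f, hf, hf'⟩ := h1
  obtain ⟨g, hg, hg'⟩ := h2
  exact ⟨g ∘ f, hg.comp hf, fun i j => (hf' i j).trans (hg' (f i) (f j))⟩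

instance : IsTrans Perm' PermLe := ⟨fun _ _ _ => permLe_trans⟩
instance : IsTrans Perm' (flip PermLe) := ⟨fun _ _ _ h1 h2 => permLe_trans h2 h1⟩

lemma strictMono_fin_id {n : ℕ} {f : Fin n → Fin n} (hf : StrictMono f) : f = id := by
  have hsurj : Function.Surjective f :=
    Finite.injective_iff_surjective.mp hf.injective
  haveI : WellFoundedLT (Fin n) := Finite.to_wellFoundedLT
  exact (hf.range_inj (strictMono_id (α := Fin n))).1 (by
    rw [Set.range_id, Set.range_eq_univ.mpr hsurj])

lemma permLe_size_le {σ π : Perm'} (h : PermLe σ π) : σ.1 ≤ π.1 := by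
  obtain ⟨f, hf, -⟩ := h
  simpa using Fintype.card_le_of_injective f hf.injective

lemma permLe_eq_of_size_eq {σ π : Perm'} (h : PermLe σ π) (hn : σ.1 = π.1) : σ = π := by
  obtain ⟨n, s⟩ := σ
  obtain ⟨m, p⟩ := π
  dsimp at hn
  subst hn
  obtain ⟨f, hf, hiff⟩ := h
  have hfid : f = id := strictMono_fin_id hf
  subst hfid
  have hq : StrictMono (fun a => p (s.symm a)) := by
    intro a b hab
    have : s (s.symm a) < s (s.symm b) := by simpa using hab
    exact (hiff _ _).1 this
  have := strictMono_fin_id hq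
  have hps : ∀ a, p (s.symm a) = a := fun a => congrFun this a
  have : p = s := Equiv.ext fun i => by simpa using hps (s i)
  simp [this]

lemma permLe_size_lt {σ π : Perm'} (h : PermLe σ π) (hne : σ ≠ π) : σ.1 < π.1 :=
  lt_of_le_of_ne (permLe_size_le h) (fun he => hne (permLe_eq_of_size_eq h he))

/-- A class with no infinite antichain is partially well ordered on `PermLe`. -/
lemma pwoClass_partiallyWellOrderedOn {C : Set Perm'} (hC : PwoClass C) :
    C.PartiallyWellOrderedOn PermLe := by
  rw [Set.partiallyWellOrderedOn_iff_exists_lt]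
  intro f hf
  by_contra H
  push_neg at H
  have H' : ∀ m n, m < n → ¬ PermLe (f m) (f n) := fun m n hmn h => H m n hmn h
  obtain ⟨g, hg | hg⟩ := exists_increasing_or_nonincreasing_subseq (flip PermLe) f
  · -- infinite strictly descending chain: sizes strictly decrease, contradiction
    have hne : ∀ m n : ℕ, m < n → f (g m) ≠ f (g n) := by
      intro m n hmn he
      exact H' (g m) (g n) (g.strictMono hmn) (he ▸ permLe_refl _)
    have hdec : ∀ n : ℕ, (f (g (n + 1))).1 < (f (g n)).1 := by
      intro n
      exact permLe_size_lt (hg n (n + 1) (Nat.lt_succ_self n))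
        (fun he => hne n (n + 1) (Nat.lt_succ_self n) he.symm)
    have hbound : ∀ n : ℕ, (f (g n)).1 + n ≤ (f (g 0)).1 := by
      intro n
      induction n with
      | zero => simp
      | succ k ih => have := hdec k; omega
    have := hbound ((f (g 0)).1 + 1)
    omega
  · -- incomparable subsequence: infinite antichain
    have hinj : Function.Injective (fun n => f (g n)) := by
      intro m n he
      dsimp only at he
      by_contra hne
      rcases lt_or_gt_of_ne hne with h | h
      · exact H' (g m) (g n) (g.strictMono h) (by rw [he]; exact permLe_refl _)
      · exact H' (g n) (g m) (g.strictMono h) (by rw [he]; exact permLe_refl _)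
    apply hC
    refine ⟨Set.range (fun n => f (g n)), ?_, Set.infinite_range_of_injective hinj, ?_⟩
    · rintro x ⟨n, rfl⟩; exact hf (g n)
    · rintro _ ⟨m, rfl⟩ _ ⟨n, rfl⟩ hne
      have hmn : m ≠ n := fun he => hne (by rw [he])
      rcases lt_or_gt_of_ne hmn with h | h
      · exact H' (g m) (g n) (g.strictMono h)
      · exact hg n m h

/-- The union of finitely many pwo permutation classes is pwo, and every pwo
permutation class is a finite union of atomic classes. -/
theorem pwo_union_and_atomic_decomposition :
    (∀ S : Finset (Set Perm'), (∀ C ∈ S, IsPermClass C ∧ PwoClass C) →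
        PwoClass (⋃ C ∈ S, C)) ∧
      ∀ C : Set Perm', IsPermClass C → PwoClass C →
        ∃ S : Finset (Set Perm'),
          (∀ A ∈ S, IsPermClass A ∧ AtomicClass A) ∧ C = ⋃ A ∈ S, A := by
  constructor
  · -- finite unions of pwo are pwo
    intro S hS
    rintro ⟨A, hAsub, hAinf, hAanti⟩
    by_cases hfin : ∀ C ∈ S, (A ∩ C).Finite
    · have : A.Finite := by
        have : A ⊆ ⋃ C ∈ S, (A ∩ C) := by
          intro x hx
          obtain ⟨C, hC, hxC⟩ := by simpa using hAsub hx
          exact Set.mem_biUnion hC ⟨hx, hxC⟩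
        exact (Set.Finite.biUnion S.finite_toSet hfin).subset this
      exact hAinf this
    · push_neg at hfin
      obtain ⟨C, hCS, hCinf⟩ := hfin
      exact (hS C hCS).2 ⟨A ∩ C, Set.inter_subset_right, hCinf,
        hAanti.subset Set.inter_subset_left⟩
  · -- atomic decomposition
    classical
    intro C hCclass hCpwo
    have hpwo := pwoClass_partiallyWellOrderedOn hCpwo
    -- subclasses of C are well-founded under ⊂
    have hwf : WellFounded ((· < ·) : {D : Set Perm' // D ⊆ C ∧ IsPermClass D} →
        {D : Set Perm' // D ⊆ C ∧ IsPermClass D} → Prop) := by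
      rw [RelEmbedding.wellFounded_iff_isEmpty]
      constructor
      rintro e
      have hchain : ∀ n : ℕ, (e (n + 1)).1 ⊂ (e n).1 := by
        intro n
        have h1 : e (n + 1) < e n := e.map_rel_iff.mpr (Nat.lt_succ_self n)
        exact Set.lt_iff_ssubset.mp (Subtype.coe_lt_coe.mpr h1)
      have hmono : ∀ m n : ℕ, m ≤ n → (e n).1 ⊆ (e m).1 := by
        intro m n hmn
        induction n with
        | zero => cases Nat.le_zero.mp hmn; exact le_refl _
        | succ k ih =>
          rcases Nat.lt_or_ge m (k + 1) with h | h
          · exact (hchain k).subset.trans (ih (Nat.lt_succ_iff.mp h))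
          · have : m = k + 1 := le_antisymm hmn h
            subst this; exact le_refl _
      choose x hx1 hx2 using fun n =>
        Set.exists_of_ssubset (hchain n)
      -- x n ∈ (e n).1 \ (e (n+1)).1
      obtain ⟨m, n, hmn, hle⟩ := hpwo.exists_lt (f := x) (fun n => (e n).2.1 (hx1 n))
      -- x m ≤ x n, m < n : x n ∈ e n ⊆ e (m+1), e (m+1) class ⇒ x m ∈ e (m+1)
      have hxn : x n ∈ (e (m + 1)).1 := hmono (m + 1) n hmn (hx1 n)
      exact hx2 m ((e (m + 1)).2.2 _ hxn _ hle)
    by_contra hbad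
    -- minimal bad subclass
    set Bad : Set {D : Set Perm' // D ⊆ C ∧ IsPermClass D} :=
      {D | ¬∃ S : Finset (Set Perm'),
        (∀ A ∈ S, IsPermClass A ∧ AtomicClass A) ∧ D.1 = ⋃ A ∈ S, A} with hBad
    have hne : Bad.Nonempty := ⟨⟨C, le_refl _, hCclass⟩, hbad⟩
    obtain ⟨D₀, hD₀, hmin⟩ := hwf.has_min Bad hne
    by_cases hatom : AtomicClass D₀.1
    · exact hD₀ ⟨{D₀.1}, by simpa using ⟨D₀.2.2, hatom⟩, by simp⟩
    · rw [AtomicClass, not_not] at hatom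
      obtain ⟨D, E, hDc, hEc, hDs, hEs, hunion⟩ := hatom
      have hDC : D ⊆ C := hDs.subset.trans D₀.2.1
      have hEC : E ⊆ C := hEs.subset.trans D₀.2.1
      have hDdec : ¬ (⟨D, hDC, hDc⟩ : {D : Set Perm' // D ⊆ C ∧ IsPermClass D}) ∈ Bad :=
        fun h => hmin _ h (Subtype.coe_lt_coe.mp (Set.lt_iff_ssubset.mpr hDs))
      have hEdec : ¬ (⟨E, hEC, hEc⟩ : {D : Set Perm' // D ⊆ C ∧ IsPermClass D}) ∈ Bad :=
        fun h => hmin _ h (Subtype.coe_lt_coe.mp (Set.lt_iff_ssubset.mpr hEs))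
      rw [hBad, Set.mem_setOf_eq, not_not] at hDdec hEdec
      obtain ⟨SD, hSD, hSDeq⟩ := hDdec
      obtain ⟨SE, hSE, hSEeq⟩ := hEdec
      refine hD₀ ⟨SD ∪ SE, ?_, ?_⟩
      · intro A hA
        rcases Finset.mem_union.mp hA with h | h
        · exact hSD A h
        · exact hSE A h
      · rw [hunion, Finset.set_biUnion_union, ← hSDeq, ← hSEeq]
end

section
/- Let C be a permutation class such that both C and the class C^{+1} of one-point extensions of C are partially well ordered (or more weakly: C^{+1} contains no infinite antichain). Then C is finitely based: the set of minimal permutations not in C is finite. -/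
/-- The class of one-point extensions of `C`: permutations containing an entry
whose removal yields a permutation of `C`. -/
def onePointExt (C : Set Perm') : Set Perm' :=
  {π | ∃ σ ∈ C, σ.1 + 1 = π.1 ∧ PermLe σ π}

/-- Deleting the last position of a permutation of length `n+1`. -/
lemma exists_delete (n : ℕ) (π : Equiv.Perm (Fin (n+1))) :
    ∃ σ : Equiv.Perm (Fin n), PermLe ⟨n, σ⟩ ⟨n+1, π⟩ := by
  classical
  set s : Finset (Fin (n+1)) := Finset.image (fun i : Fin n => π i.castSucc) Finset.univ with hs
  have hcard : s.card = n := by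
    rw [hs, Finset.card_image_of_injective _ (fun a b h => by
      exact Fin.castSucc_injective n (π.injective h))]
    simp
  let e := s.orderIsoOfFin hcard
  have hmem : ∀ i : Fin n, π i.castSucc ∈ s := by
    intro i; simp [hs]
  let g : Fin n → Fin n := fun i => e.symm ⟨π i.castSucc, hmem i⟩
  have hginj : Function.Injective g := by
    intro a b h
    have := e.symm.injective h
    have : π a.castSucc = π b.castSucc := congrArg Subtype.val this
    exact Fin.castSucc_injective n (π.injective this)
  let σ : Equiv.Perm (Fin n) := Equiv.ofBijective g (Finite.injective_iff_bijective.mp hginj)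
  refine ⟨σ, Fin.castSucc, Fin.strictMono_castSucc, ?_⟩
  intro i j
  show σ i < σ j ↔ _
  have : ∀ i, σ i = g i := fun i => rfl
  rw [this, this]
  show e.symm _ < e.symm _ ↔ _
  rw [e.symm.lt_iff_lt]
  exact Iff.rfl

/-- If the class `C^{+1}` of one-point extensions of a permutation class `C`
contains no infinite antichain, then `C` is finitely based: the set of minimal
permutations not in `C` is finite. -/
theorem finitely_based_of_onePointExt_pwo (C : Set Perm') (hC : IsPermClass C)
    (h1 : PwoClass (onePointExt C)) :
    {β : Perm' | β ∉ C ∧ ∀ σ, PermLe σ β → σ ≠ β → σ ∈ C}.Finite := by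
  set B := {β : Perm' | β ∉ C ∧ ∀ σ, PermLe σ β → σ ≠ β → σ ∈ C} with hB
  by_contra hfin
  have hinf : B.Infinite := hfin
  -- antichain
  have hanti : IsAntichain PermLe B := by
    intro a ha b hb hne hle
    exact ha.1 (hb.2 a hle hne)
  -- B minus the length-0 elements
  have hB0 : (B ∩ {β : Perm' | β.1 = 0}).Finite := by
    apply Set.Finite.subset (Set.finite_singleton (⟨0, 1⟩ : Perm'))
    rintro ⟨m, τ⟩ ⟨-, hm⟩
    simp only [Set.mem_setOf_eq] at hm
    subst hm
    simp [Subsingleton.elim τ 1]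
  have hinf' : (B \ {β : Perm' | β.1 = 0}).Infinite := by
    intro h
    exact hinf (((h.union hB0).subset (by
      intro x hx
      by_cases hx0 : x.1 = 0
      · exact Or.inr ⟨hx, hx0⟩
      · exact Or.inl ⟨hx, hx0⟩)))
  apply h1
  refine ⟨B \ {β : Perm' | β.1 = 0}, ?_, hinf', hanti.subset Set.diff_subset⟩
  rintro ⟨m, π⟩ ⟨hβ, hm⟩
  simp only [Set.mem_setOf_eq] at hm
  obtain ⟨n, rfl⟩ : ∃ n, m = n + 1 := Nat.exists_eq_succ_of_ne_zero hm
  obtain ⟨σ, hσ⟩ := exists_delete n π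
  have hne : (⟨n, σ⟩ : Perm') ≠ ⟨n + 1, π⟩ := by
    intro h
    exact absurd (congrArg Sigma.fst h) (by simp)
  exact ⟨⟨n, σ⟩, hβ.2 _ hσ hne, rfl, hσ⟩
end
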